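/- arXiv:1003.5939 — 5 statements merged into one kernel-verified Lean document; each statement's English description precedes it below -/
import Mathlib

section
/- Let d(m,n) denote the number of m-colored compositions of n into parts greater than 1. Then for 2 ≤ n ≤ m+1, d(m,n) = 2^{n-2}. -/
namespace CCaux

/-- Encoding of a colored composition as a bool string:
part `(x,y)` becomes `F^y T F^(x-2-y) T`. -/
def enc : List (ℕ × ℕ) → List Bool
  | [] => []
  | (x, y) :: l =>
      List.replicate y false ++ true ::
        (List.replicate (x - 2 - y) false ++ true :: enc l)

lemma enc_length (l : List (ℕ × ℕ)) (h : ∀ p ∈ l, 2 ≤ p.1 ∧ p.2 ≤ p.1 - 2) :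
    (enc l).length = (l.map Prod.fst).sum := by
  induction l with
  | nil => simp [enc]
  | cons p l ih =>
    obtain ⟨x, y⟩ := p
    have h1 := h (x, y) (by simp)
    simp only [enc, List.length_append, List.length_replicate, List.length_cons,
      List.map_cons, List.sum_cons]
    rw [ih (fun q hq => h q (List.mem_cons_of_mem _ hq))]
    simp at h1
    omega

lemma enc_count (l : List (ℕ × ℕ)) : (enc l).count true = 2 * l.length := by
  induction l with
  | nil => simp [enc]
  | cons p l ih =>
    obtain ⟨x, y⟩ := p
    simp [enc, List.count_append, List.count_replicate, ih, List.count_cons]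
    omega

lemma enc_last (l : List (ℕ × ℕ)) (h : l ≠ []) : (enc l).getLast? = some true := by
  induction l with
  | nil => exact absurd rfl h
  | cons p l ih =>
    obtain ⟨x, y⟩ := p
    by_cases hl : l = []
    · subst hl
      show (List.replicate y false ++ true ::
        (List.replicate (x - 2 - y) false ++ true :: enc [])).getLast? = some true
      rw [show (List.replicate y false ++ true ::
          (List.replicate (x - 2 - y) false ++ true :: enc [])) =
          (List.replicate y false ++ true :: List.replicate (x - 2 - y) false) ++ [true] by
        simp [enc]]
      exact List.getLast?_concat
    · have hne : enc l ≠ [] := by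
        intro hc
        have := enc_count l
        rw [hc] at this
        simp at this
        exact hl this
      show (List.replicate y false ++ true ::
        (List.replicate (x - 2 - y) false ++ true :: enc l)).getLast? = some true
      rw [show (List.replicate y false ++ true ::
          (List.replicate (x - 2 - y) false ++ true :: enc l)) =
          (List.replicate y false ++ true :: List.replicate (x - 2 - y) false ++ [true]) ++ enc l
          by simp]
      rw [List.getLast?_append_of_ne_nil _ hne]
      exact ih hl

lemma rep_cons_inj : ∀ (y1 y2 : ℕ) (r1 r2 : List Bool),
    List.replicate y1 false ++ true :: r1 = List.replicate y2 false ++ true :: r2 →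
    y1 = y2 ∧ r1 = r2 := by
  intro y1
  induction y1 with
  | zero =>
    intro y2 r1 r2 h
    cases y2 with
    | zero => simpa using h
    | succ k => simp [List.replicate_succ] at h
  | succ k ih =>
    intro y2 r1 r2 h
    cases y2 with
    | zero => simp [List.replicate_succ] at h
    | succ j =>
      simp only [List.replicate_succ, List.cons_append, List.cons.injEq] at h
      obtain ⟨h1, h2⟩ := ih j r1 r2 h.2
      exact ⟨by omega, h2⟩

lemma enc_inj : ∀ (l1 l2 : List (ℕ × ℕ)),
    (∀ p ∈ l1, 2 ≤ p.1 ∧ p.2 ≤ p.1 - 2) → (∀ p ∈ l2, 2 ≤ p.1 ∧ p.2 ≤ p.1 - 2) →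
    enc l1 = enc l2 → l1 = l2 := by
  intro l1
  induction l1 with
  | nil =>
    intro l2 _ _ h
    cases l2 with
    | nil => rfl
    | cons p l =>
      obtain ⟨x, y⟩ := p
      exfalso
      simp only [enc] at h
      exact absurd h.symm (by simp)
  | cons p l1 ih =>
    intro l2 h1 h2 h
    cases l2 with
    | nil =>
      obtain ⟨x, y⟩ := p
      exfalso
      simp only [enc] at h
      exact absurd h (by simp)
    | cons q l2 =>
      obtain ⟨x1, y1⟩ := p
      obtain ⟨x2, y2⟩ := q
      simp only [enc] at h
      obtain ⟨hy, h'⟩ := rep_cons_inj _ _ _ _ h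
      obtain ⟨hz, h''⟩ := rep_cons_inj _ _ _ _ h'
      have c1 := h1 (x1, y1) (by simp)
      have c2 := h2 (x2, y2) (by simp)
      simp at c1 c2
      have hx : x1 = x2 := by omega
      rw [ih l2 (fun q hq => h1 q (List.mem_cons_of_mem _ hq))
        (fun q hq => h2 q (List.mem_cons_of_mem _ hq)) h'', hx, hy]

lemma split_first_true : ∀ (w : List Bool), true ∈ w →
    ∃ y w', w = List.replicate y false ++ true :: w' := by
  intro w
  induction w with
  | nil => intro h; simp at h
  | cons b w ih =>
    intro h
    cases b with
    | true => exact ⟨0, w, by simp⟩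
    | false =>
      have : true ∈ w := by simpa using h
      obtain ⟨y, w', hw⟩ := ih this
      exact ⟨y + 1, w', by simp [List.replicate_succ, hw]⟩

lemma dec_aux : ∀ (n : ℕ) (w : List Bool), w.length ≤ n →
    Even (w.count true) → w.getLast? = some true →
    ∃ l, enc l = w ∧ (∀ p ∈ l, 2 ≤ p.1 ∧ p.2 ≤ p.1 - 2) ∧
      (l.map Prod.fst).sum = w.length := by
  intro n
  induction n with
  | zero =>
    intro w hlen _ hlast
    have : w = [] := List.length_eq_zero_iff.mp (Nat.le_zero.mp hlen)
    subst this
    simp at hlast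
  | succ n ih =>
    intro w hlen hcount hlast
    have hwne : w ≠ [] := by rintro rfl; simp at hlast
    have hmem : true ∈ w :=
      List.mem_of_mem_getLast? (by simp [hlast])
    obtain ⟨y, w1, hw1⟩ := split_first_true w hmem
    have hc1 : w.count true = w1.count true + 1 := by
      rw [hw1]; simp [List.count_append, List.count_replicate, List.count_cons]
    have hodd : Odd (w1.count true) := by
      rcases hcount with ⟨k, hk⟩
      exact ⟨k - 1, by omega⟩
    have hmem1 : true ∈ w1 := by
      rw [← List.count_pos_iff]
      rcases hodd with ⟨k, hk⟩; omega
    obtain ⟨z, w2, hw2⟩ := split_first_true w1 hmem1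
    have hc2 : w1.count true = w2.count true + 1 := by
      rw [hw2]; simp [List.count_append, List.count_replicate, List.count_cons]
    have hlenw : w.length = y + 1 + (z + 1 + w2.length) := by
      rw [hw1, hw2]; simp; omega
    by_cases hw2nil : w2 = []
    · subst hw2nil
      refine ⟨[(y + z + 2, y)], ?_, ?_, ?_⟩
      · show List.replicate y false ++ true ::
          (List.replicate (y + z + 2 - 2 - y) false ++ true :: enc []) = w
        rw [hw1, hw2, show y + z + 2 - 2 - y = z by omega]
        simp [enc]
      · intro p hp
        simp at hp
        subst hp
        constructor <;> simp <;> omega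
      · simp only [List.length_nil] at hlenw
        simp; omega
    · have hlast2 : w2.getLast? = some true := by
        rw [hw1, hw2] at hlast
        rw [show List.replicate y false ++ true ::
            (List.replicate z false ++ true :: w2) =
            (List.replicate y false ++ true :: List.replicate z false ++ [true]) ++ w2 by
          simp] at hlast
        rwa [List.getLast?_append_of_ne_nil _ hw2nil] at hlast
      have hcount2 : Even (w2.count true) := by
        rcases hcount with ⟨k, hk⟩
        exact ⟨k - 1, by omega⟩
      obtain ⟨l, hel, hprop, hsum⟩ := ih w2 (by omega) hcount2 hlast2
      refine ⟨(y + z + 2, y) :: l, ?_, ?_, ?_⟩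
      · show List.replicate y false ++ true ::
          (List.replicate (y + z + 2 - 2 - y) false ++ true :: enc l) = w
        rw [hw1, hw2, show y + z + 2 - 2 - y = z by omega, hel]
      · intro p hp
        rcases List.mem_cons.mp hp with hp | hp
        · subst hp
          constructor <;> simp <;> omega
        · exact hprop p hp
      · simp [hsum]; omega

lemma finite_parity (s : ℕ) (P : ℕ → Prop) :
    {w : List Bool | w.length = s ∧ P (w.count true)}.Finite :=
  (List.finite_length_eq Bool s).subset fun _ hw => hw.1

lemma cons_decomp (s : ℕ) (P : ℕ → Prop) :
    {w : List Bool | w.length = s + 1 ∧ P (w.count true)} =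
      (List.cons false '' {v : List Bool | v.length = s ∧ P (v.count true)}) ∪
      (List.cons true '' {v : List Bool | v.length = s ∧ P (v.count true + 1)}) := by
  ext w
  constructor
  · rintro ⟨h1, h2⟩
    cases w with
    | nil => simp at h1
    | cons b v =>
      cases b
      · left
        refine ⟨v, ⟨by simpa using h1, ?_⟩, rfl⟩
        simpa [List.count_cons] using h2
      · right
        refine ⟨v, ⟨by simpa using h1, ?_⟩, rfl⟩
        simpa [List.count_cons] using h2
  · rintro (⟨v, ⟨hv1, hv2⟩, rfl⟩ | ⟨v, ⟨hv1, hv2⟩, rfl⟩) <;>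
      simp [List.count_cons, hv1, hv2]

lemma card_pair : ∀ s : ℕ,
    {w : List Bool | w.length = s + 1 ∧ Odd (w.count true)}.ncard = 2 ^ s ∧
    {w : List Bool | w.length = s + 1 ∧ Even (w.count true)}.ncard = 2 ^ s := by
  intro s
  induction s with
  | zero =>
    constructor
    · have : {w : List Bool | w.length = 0 + 1 ∧ Odd (w.count true)} = {[true]} := by
        ext w
        constructor
        · rintro ⟨h1, h2⟩
          obtain ⟨a, rfl⟩ := List.length_eq_one_iff.mp h1
          cases a
          · simp at h2
          · rfl
        · rintro rfl
          exact ⟨rfl, by simp⟩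
      rw [this]; simp
    · have : {w : List Bool | w.length = 0 + 1 ∧ Even (w.count true)} = {[false]} := by
        ext w
        constructor
        · rintro ⟨h1, h2⟩
          obtain ⟨a, rfl⟩ := List.length_eq_one_iff.mp h1
          cases a
          · rfl
          · simp [Nat.even_iff] at h2
        · rintro rfl
          exact ⟨rfl, by simp⟩
      rw [this]; simp
  | succ s ih =>
    have hd : Disjoint
        (List.cons false '' {v : List Bool | v.length = s + 1 ∧ Odd (v.count true)})
        (List.cons true '' {v : List Bool | v.length = s + 1 ∧ Even (v.count true)}) := by
      rw [Set.disjoint_left]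
      rintro w ⟨v, _, rfl⟩ ⟨u, _, h⟩
      simp at h
    have hd' : Disjoint
        (List.cons false '' {v : List Bool | v.length = s + 1 ∧ Even (v.count true)})
        (List.cons true '' {v : List Bool | v.length = s + 1 ∧ Odd (v.count true)}) := by
      rw [Set.disjoint_left]
      rintro w ⟨v, _, rfl⟩ ⟨u, _, h⟩
      simp at h
    constructor
    · rw [show {w : List Bool | w.length = s + 1 + 1 ∧ Odd (w.count true)} =
          (List.cons false '' {v : List Bool | v.length = s + 1 ∧ Odd (v.count true)}) ∪
          (List.cons true '' {v : List Bool | v.length = s + 1 ∧ Even (v.count true)}) by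
        rw [cons_decomp (s + 1) Odd]
        congr 2
        ext v
        simp [Nat.even_add_one, Nat.odd_add_one]]
      rw [Set.ncard_union_eq hd ((finite_parity _ _).image _) ((finite_parity _ _).image _),
        Set.ncard_image_of_injective _ (List.cons_injective),
        Set.ncard_image_of_injective _ (List.cons_injective), ih.1, ih.2]
      ring
    · rw [show {w : List Bool | w.length = s + 1 + 1 ∧ Even (w.count true)} =
          (List.cons false '' {v : List Bool | v.length = s + 1 ∧ Even (v.count true)}) ∪
          (List.cons true '' {v : List Bool | v.length = s + 1 ∧ Odd (v.count true)}) by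
        rw [cons_decomp (s + 1) Even]
        congr 2
        ext v
        simp [Nat.even_add_one, Nat.odd_add_one]]
      rw [Set.ncard_union_eq hd' ((finite_parity _ _).image _) ((finite_parity _ _).image _),
        Set.ncard_image_of_injective _ (List.cons_injective),
        Set.ncard_image_of_injective _ (List.cons_injective), ih.1, ih.2]
      ring

end CCaux

/-- An `m`-colored composition of `n` into parts greater than 1: a list of
pairs `(xᵢ, yᵢ)` with `∑ xᵢ = n`, `xᵢ ≥ 2` and `yᵢ ≤ min (xᵢ - 2) (m - 1)`. -/
def coloredCompositions (m n : ℕ) : Set (List (ℕ × ℕ)) :=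
  {l | (l.map Prod.fst).sum = n ∧ ∀ p ∈ l, 2 ≤ p.1 ∧ p.2 ≤ min (p.1 - 2) (m - 1)}

/-- For `2 ≤ n ≤ m + 1`, `d(m, n) = 2^{n-2}`. -/
theorem coloredCompositions_card_pow (m n : ℕ) (hm : 1 ≤ m)
    (h2 : 2 ≤ n) (hn : n ≤ m + 1) :
    (coloredCompositions m n).ncard = 2 ^ (n - 2) := by
  have hC : coloredCompositions m n =
      {l : List (ℕ × ℕ) | (l.map Prod.fst).sum = n ∧
        ∀ p ∈ l, 2 ≤ p.1 ∧ p.2 ≤ p.1 - 2} := by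
    ext l
    constructor
    · rintro ⟨h1, h2⟩
      refine ⟨h1, fun p hp => ?_⟩
      obtain ⟨c1, c2⟩ := h2 p hp
      exact ⟨c1, le_trans c2 (min_le_left _ _)⟩
    · rintro ⟨h1, h2⟩
      refine ⟨h1, fun p hp => ?_⟩
      obtain ⟨c1, c2⟩ := h2 p hp
      have hx : p.1 ≤ n := by
        rw [← h1]
        exact List.single_le_sum (fun x _ => Nat.zero_le x) _
          (List.mem_map_of_mem (f := Prod.fst) hp)
      exact ⟨c1, le_min c2 (by omega)⟩
  set C : Set (List (ℕ × ℕ)) :=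
    {l : List (ℕ × ℕ) | (l.map Prod.fst).sum = n ∧
      ∀ p ∈ l, 2 ≤ p.1 ∧ p.2 ≤ p.1 - 2} with hCdef
  have himg : CCaux.enc '' C =
      {w : List Bool | w.length = n ∧ Even (w.count true) ∧
        w.getLast? = some true} := by
    ext w
    constructor
    · rintro ⟨l, ⟨h1, h2⟩, rfl⟩
      have hlne : l ≠ [] := by
        rintro rfl
        simp at h1
        omega
      refine ⟨?_, ?_, CCaux.enc_last l hlne⟩
      · rw [CCaux.enc_length l h2, h1]
      · rw [CCaux.enc_count]
        exact ⟨l.length, by ring⟩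
    · rintro ⟨h1, h2, h3⟩
      obtain ⟨l, hel, hprop, hsum⟩ := CCaux.dec_aux w.length w le_rfl h2 h3
      exact ⟨l, ⟨by rw [hsum, h1], hprop⟩, hel⟩
  have hD : {w : List Bool | w.length = n ∧ Even (w.count true) ∧
        w.getLast? = some true} =
      (fun v : List Bool => v ++ [true]) ''
        {v : List Bool | v.length = n - 1 ∧ Odd (v.count true)} := by
    ext w
    constructor
    · rintro ⟨h1, h2, h3⟩
      refine ⟨w.dropLast, ⟨?_, ?_⟩, ?_⟩
      · rw [List.length_dropLast, h1]
      · have hw : w.dropLast ++ [true] = w :=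
          List.dropLast_append_getLast? true (Option.mem_def.mpr h3)
        have : w.count true = w.dropLast.count true + 1 := by
          conv_lhs => rw [← hw]
          simp [List.count_append]
        rw [this] at h2
        exact Nat.even_add_one.mp h2 |> fun h => Nat.odd_iff.mpr (by
          rcases Nat.even_or_odd (w.dropLast.count true) with he | ho
          · exact absurd he h
          · exact Nat.odd_iff.mp ho)
      · exact List.dropLast_append_getLast? true (Option.mem_def.mpr h3)
    · rintro ⟨v, ⟨hv1, hv2⟩, rfl⟩
      refine ⟨by simp [hv1]; omega, ?_, List.getLast?_concat⟩
      rw [List.count_append]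
      simpa using hv2.add_one
  rw [hC, ← Set.ncard_image_of_injOn (f := CCaux.enc)
    (fun l1 hl1 l2 hl2 h => CCaux.enc_inj l1 l2 hl1.2 hl2.2 h)]
  rw [himg, hD, Set.ncard_image_of_injective _
    (fun v1 v2 h => by simpa using h)]
  have := (CCaux.card_pair (n - 2)).1
  rw [show n - 2 + 1 = n - 1 by omega] at this
  exact this
end

section
/- Let d(m,n) denote the number of m-colored compositions of n into parts greater than 1. Then d(m,n) = P^(m+1)_{n+m-1}, where P^(m+1) is defined by the (m+1)-th order recurrence P_n = sum_{i=1}^{m+1} P_{n-i} with initial conditions P_0 = ... = P_{m-2} = 0, P_{m-1} = 1, P_m = 0. -/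
namespace CCaux

/-- the index finset of possible first pairs -/
def S (m n : ℕ) : Finset (ℕ × ℕ) :=
  (Finset.Icc 2 n ×ˢ Finset.range m).filter fun p => p.2 ≤ p.1 - 2

lemma mem_S {m n : ℕ} {p : ℕ × ℕ} :
    p ∈ S m n ↔ 2 ≤ p.1 ∧ p.1 ≤ n ∧ p.2 < m ∧ p.2 ≤ p.1 - 2 := by
  simp [S, Finset.mem_filter, Finset.mem_product, and_assoc]

/-- counting function defined by the composition recurrence -/
def g (m : ℕ) : ℕ → ℕ
  | 0 => 1
  | n+1 => ∑ x ∈ (Finset.Icc 2 (n+1)).attach, min (x.1 - 1) m * g m (n+1 - x.1)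
decreasing_by
  have h := (Finset.mem_Icc.mp x.2).1; omega

lemma g_succ (m n : ℕ) :
    g m (n+1) = ∑ x ∈ Finset.Icc 2 (n+1), min (x - 1) m * g m (n+1 - x) := by
  rw [g, ← Finset.sum_attach (Finset.Icc 2 (n+1)) (fun x => min (x - 1) m * g m (n+1 - x))]

/-- Finset version of coloredCompositions -/
def F (m : ℕ) : ℕ → Finset (List (ℕ × ℕ))
  | 0 => {[]}
  | n+1 => (S m (n+1)).attach.biUnion fun p => (F m (n+1 - p.1.1)).image (p.1 :: ·)
decreasing_by
  have h := (mem_S.mp p.2).1; omega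

lemma card_F (m : ℕ) : ∀ n, (F m n).card = g m n := by
  intro n
  induction n using Nat.strong_induction_on with
  | _ n ih =>
    match n with
    | 0 => rw [F, g]; rfl
    | n+1 =>
      rw [F, Finset.card_biUnion]
      · have h1 : ∀ p ∈ (S m (n+1)).attach,
            ((F m (n+1 - p.1.1)).image (p.1 :: ·)).card = g m (n+1 - p.1.1) := by
          intro p _
          rw [Finset.card_image_of_injective _ List.cons_injective, ih]
          have := (mem_S.mp p.2).1; omega
        rw [Finset.sum_congr rfl h1,
          Finset.sum_attach (S m (n+1)) (fun p => g m (n+1 - p.1)),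
          g_succ, S, Finset.sum_filter, Finset.sum_product]
        refine Finset.sum_congr rfl fun x hx => ?_
        have hx2 := (Finset.mem_Icc.mp hx).1
        rw [← Finset.sum_filter]
        have hfil : (Finset.range m).filter (fun y => y ≤ x - 2)
            = Finset.range (min (x - 1) m) := by
          ext y; simp only [Finset.mem_filter, Finset.mem_range, Finset.mem_range]; omega
        simp [hfil, Finset.sum_const, mul_comm]
      · intro p _ q _ hpq
        simp only [Finset.disjoint_left, Finset.mem_image]
        rintro l ⟨a, _, rfl⟩ ⟨b, _, hb⟩
        obtain ⟨h1, -⟩ := List.cons.inj hb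
        exact hpq (Subtype.ext h1.symm)

lemma cc_zero (m : ℕ) : coloredCompositions m 0 = {([] : List (ℕ × ℕ))} := by
  ext l
  constructor
  · rintro ⟨hsum, hmem⟩
    cases l with
    | nil => rfl
    | cons a t =>
      have := (hmem a (by simp)).1
      simp at hsum
      omega
  · rintro rfl
    exact ⟨rfl, by simp⟩

lemma cc_eq_F (m : ℕ) (hm : 1 ≤ m) : ∀ n, coloredCompositions m n = ↑(F m n) := by
  intro n
  induction n using Nat.strong_induction_on with
  | _ n ih =>
    match n with
    | 0 => rw [cc_zero, F]; simp
    | n+1 =>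
      ext l
      rw [F]
      simp only [Finset.coe_biUnion, Finset.mem_coe, Finset.mem_attach, Set.mem_iUnion,
        Finset.mem_image, Set.iUnion_true]
      constructor
      · rintro ⟨hsum, hmem⟩
        cases l with
        | nil => simp at hsum
        | cons a t =>
          have ha := hmem a (by simp)
          simp only [List.map_cons, List.sum_cons] at hsum
          have hp : a ∈ S m (n+1) := by
            rw [mem_S]
            refine ⟨ha.1, by omega, ?_, ?_⟩ <;> [skip; skip] <;>
              · have := ha.2; omega
          refine ⟨⟨a, hp⟩, t, ?_, rfl⟩
          have ht : t ∈ coloredCompositions m (n+1 - a.1) := by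
            refine ⟨by omega, fun q hq => hmem q (by simp [hq])⟩
          have := ih (n+1 - a.1) (by have := ha.1; omega)
          rw [this] at ht
          exact ht
      · rintro ⟨⟨p, hp⟩, t, ht, rfl⟩
        rw [mem_S] at hp
        have ht' : t ∈ coloredCompositions m (n+1 - p.1) := by
          rw [ih (n+1 - p.1) (by omega)]; exact ht
        obtain ⟨hsum, hmem⟩ := ht'
        refine ⟨by simp [hsum]; omega, ?_⟩
        rintro q hq
        rcases List.mem_cons.mp hq with rfl | hq'
        · exact ⟨hp.1, by omega⟩
        · exact hmem q hq'

lemma sumT (m : ℕ) (hm : 1 ≤ m) (P : ℕ → ℕ)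
    (hzero : ∀ i, i + 2 ≤ m → P i = 0)
    (hone : P (m - 1) = 1) (hlast : P m = 0)
    (hrec : ∀ n, m + 1 ≤ n → P n = ∑ i ∈ Finset.Icc 1 (m + 1), P (n - i)) :
    ∀ n, 1 ≤ n →
      ∑ x ∈ Finset.Icc 2 n, min (x - 1) m * P (n + m - 1 - x) = P (n + m - 1) := by
  intro n hn
  induction n, hn using Nat.le_induction with
  | base =>
    rw [show (1 + m - 1) = m by omega, hlast,
      Finset.Icc_eq_empty (by omega), Finset.sum_empty]
  | succ n hn ih =>
    -- RHS identity
    have hPn : P (n + 1 + m - 1) = P (n + m - 1)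
        + ∑ x ∈ Finset.Icc 1 (min n m), P (n + m - 1 - x) := by
      rw [show n + 1 + m - 1 = n + m by omega, hrec (n + m) (by omega),
        show Finset.Icc 1 (m + 1) = insert 1 (Finset.Icc 2 (m + 1)) from by
          ext z; simp [Finset.mem_Icc]; omega,
        Finset.sum_insert (by simp)]
      congr 1
      have hre : ∑ i ∈ Finset.Icc 2 (m + 1), P (n + m - i)
          = ∑ x ∈ Finset.Icc 1 m, P (n + m - 1 - x) :=
        Finset.sum_nbij' (fun z => z - 1) (fun x => x + 1)
          (fun a ha => by simp only [Finset.mem_Icc] at ha ⊢; omega)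
          (fun a ha => by simp only [Finset.mem_Icc] at ha ⊢; omega)
          (fun a ha => by simp only [Finset.mem_Icc] at ha; omega)
          (fun a ha => by simp only [Finset.mem_Icc] at ha; omega)
          (fun a ha => by
            simp only [Finset.mem_Icc] at ha
            rw [show n + m - a = n + m - 1 - (a - 1) by omega])
      rw [hre]
      refine (Finset.sum_subset (Finset.Icc_subset_Icc_right (by omega))
        fun x hx1 hx2 => ?_).symm
      rw [Finset.mem_Icc] at hx1 hx2
      exact hzero _ (by omega)
    -- LHS reindex
    have hre : ∑ x ∈ Finset.Icc 2 (n + 1), min (x - 1) m * P (n + 1 + m - 1 - x)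
        = ∑ z ∈ Finset.Icc 1 n, min z m * P (n + m - 1 - z) :=
      Finset.sum_nbij' (fun x => x - 1) (fun z => z + 1)
        (fun a ha => by simp only [Finset.mem_Icc] at ha ⊢; omega)
        (fun a ha => by simp only [Finset.mem_Icc] at ha ⊢; omega)
        (fun a ha => by simp only [Finset.mem_Icc] at ha; omega)
        (fun a ha => by simp only [Finset.mem_Icc] at ha; omega)
        (fun a ha => by
          simp only [Finset.mem_Icc] at ha
          rw [show n + 1 + m - 1 - a = n + m - 1 - (a - 1) by omega])
    rw [hre, hPn]
    have hsplit : ∀ z ∈ Finset.Icc 1 n,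
        min z m * P (n + m - 1 - z)
          = min (z - 1) m * P (n + m - 1 - z)
            + (if z ≤ m then P (n + m - 1 - z) else 0) := by
      intro z hz
      have h1 := (Finset.mem_Icc.mp hz).1
      rcases le_or_gt z m with h | h
      · rw [if_pos h, show min z m = min (z - 1) m + 1 by omega, add_mul, one_mul]
      · rw [if_neg (by omega), show min z m = min (z - 1) m by omega, add_zero]
    rw [Finset.sum_congr rfl hsplit, Finset.sum_add_distrib]
    congr 1
    · -- first sum equals ih's sum
      rw [show Finset.Icc 1 n = insert 1 (Finset.Icc 2 n) from by
          ext z; simp [Finset.mem_Icc]; omega,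
        Finset.sum_insert (by simp), ← ih]
      simp
    · -- second sum
      rw [← Finset.sum_filter,
        show (Finset.Icc 1 n).filter (fun z => z ≤ m) = Finset.Icc 1 (min n m) from by
          ext z; simp [Finset.mem_Icc]; omega]

lemma gP (m : ℕ) (hm : 1 ≤ m) (P : ℕ → ℕ)
    (hzero : ∀ i, i + 2 ≤ m → P i = 0)
    (hone : P (m - 1) = 1) (hlast : P m = 0)
    (hrec : ∀ n, m + 1 ≤ n → P n = ∑ i ∈ Finset.Icc 1 (m + 1), P (n - i)) :
    ∀ n, 1 ≤ n → g m n = P (n + m - 1) := by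
  intro n
  induction n using Nat.strong_induction_on with
  | _ n ih =>
    intro hn
    match n, hn with
    | n + 1, _ =>
      rw [g_succ, ← sumT m hm P hzero hone hlast hrec (n + 1) (by omega)]
      refine Finset.sum_congr rfl fun x hx => ?_
      rw [Finset.mem_Icc] at hx
      congr 1
      rcases Nat.eq_or_lt_of_le hx.2 with h | h
      · rw [show n + 1 - x = 0 by omega, show n + 1 + m - 1 - x = m - 1 by omega, hone, g]
      · rw [ih (n + 1 - x) (by omega) (by omega)]
        congr 1
        omega

end CCaux

/-- `d(m, n) = P^(m+1)_{n+m-1}` where `P^(m+1)` satisfies the `(m+1)`-th order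
recurrence with initial conditions `P_0 = … = P_{m-2} = 0`, `P_{m-1} = 1`,
`P_m = 0`. -/
theorem coloredCompositions_card_eq_genP (m : ℕ) (hm : 1 ≤ m) (P : ℕ → ℕ)
    (hzero : ∀ i, i + 2 ≤ m → P i = 0)
    (hone : P (m - 1) = 1) (hlast : P m = 0)
    (hrec : ∀ n, m + 1 ≤ n → P n = ∑ i ∈ Finset.Icc 1 (m + 1), P (n - i)) :
    ∀ n, 1 ≤ n → (coloredCompositions m n).ncard = P (n + m - 1) := by
  intro n hn
  rw [CCaux.cc_eq_F m hm n, Set.ncard_coe_finset, CCaux.card_F,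
    CCaux.gP m hm P hzero hone hlast hrec n hn]
end

section
/- For n ≥ 2 and 2 ≤ k ≤ n-1, the total number of occurrences of the factor 0 1^{k-1} (as a primitive block of order 1) across all binary Lyndon words of length dividing n that contain 0 but not 00 equals the Fibonacci number F_{n-k-1}. -/
/-- A binary word (over `Bool`, `false` = 0, `true` = 1) is a Lyndon word if
it is strictly lexicographically smaller than each of its proper rotations. -/
def IsLyndon (w : List Bool) : Prop :=
  ∀ i, 0 < i → i < w.length → w < w.rotate i

namespace CPB

variable {α : Type*}

/-- `m`-fold repetition of a list. -/
def pw (m : ℕ) (l : List α) : List α := (List.replicate m l).flatten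

/-- Block encoding of a composition. -/
def W (c : List ℕ) : List Bool := (c.map fun j => false :: List.replicate j true).flatten

/-- A list is primitive (aperiodic) if no proper rotation fixes it. -/
def Prim (l : List α) : Prop := ∀ i, 0 < i → i < l.length → l.rotate i ≠ l

@[simp] lemma pw_zero (l : List α) : pw 0 l = [] := rfl

@[simp] lemma pw_succ (m : ℕ) (l : List α) : pw (m + 1) l = l ++ pw m l := by
  simp [pw, List.replicate_succ]

@[simp] lemma pw_nil (m : ℕ) : pw m ([] : List α) = [] := by
  induction m with
  | zero => rfl
  | succ m ih => simp [ih]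

@[simp] lemma length_pw (m : ℕ) (l : List α) : (pw m l).length = m * l.length := by
  induction m with
  | zero => simp [pw]
  | succ m ih => simp [ih, Nat.succ_mul, Nat.add_comm]

@[simp] lemma pw_one (l : List α) : pw 1 l = l := by simp

@[simp] lemma W_nil : W ([] : List ℕ) = [] := rfl

lemma W_cons (j : ℕ) (c : List ℕ) :
    W (j :: c) = false :: (List.replicate j true ++ W c) := by
  simp [W]

lemma W_append (c d : List ℕ) : W (c ++ d) = W c ++ W d := by
  simp [W]

@[simp] lemma length_W (c : List ℕ) : (W c).length = c.length + c.sum := by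
  induction c with
  | nil => rfl
  | cons j c ih => simp [W_cons, ih]; omega

lemma W_pw (m : ℕ) (c : List ℕ) : W (pw m c) = pw m (W c) := by
  induction m with
  | zero => rfl
  | succ m ih => simp [W_append, ih]

lemma W_head? (c : List ℕ) (hc : c ≠ []) : (W c).head? = some false := by
  cases c with
  | nil => exact absurd rfl hc
  | cons j c => simp [W_cons]

lemma W_ne_nil (c : List ℕ) (hc : c ≠ []) : W c ≠ [] := by
  cases c with
  | nil => exact absurd rfl hc
  | cons j c => simp [W_cons]

lemma false_mem_W {c : List ℕ} (hc : c ≠ []) : false ∈ W c := by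
  cases c with
  | nil => exact absurd rfl hc
  | cons j c => rw [W_cons]; simp

private lemma W_inj_aux {j j' : ℕ} {c c' : List ℕ}
    (h : List.replicate j true ++ W c = List.replicate j' true ++ W c') (hj : j < j') :
    False := by
  have hrep : List.replicate j' true = List.replicate j true ++ List.replicate (j' - j) true := by
    rw [← List.replicate_add]; congr 1; omega
  rw [hrep, List.append_assoc, List.append_cancel_left_eq] at h
  have h1 := congrArg List.head? h
  have hne : j' - j ≠ 0 := by omega
  rcases Nat.exists_eq_succ_of_ne_zero hne with ⟨t, ht⟩
  rw [ht] at h1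
  simp only [List.replicate_succ, List.cons_append, List.head?_cons] at h1
  cases hc : c with
  | nil => rw [hc] at h1; simp at h1
  | cons a c2 => rw [hc, W_cons] at h1; simp at h1

lemma W_inj : ∀ {c c' : List ℕ}, W c = W c' → c = c' := by
  intro c
  induction c with
  | nil =>
    intro c' h
    cases c' with
    | nil => rfl
    | cons j c' => simp [W_cons] at h
  | cons j c ih =>
    intro c' h
    cases c' with
    | nil => simp [W_cons] at h
    | cons j' c' =>
      simp only [W_cons, List.cons.injEq] at h
      obtain ⟨-, h⟩ := h
      rcases Nat.lt_trichotomy j j' with hj | hj | hj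
      · exact absurd (W_inj_aux h hj) (by simp)
      · subst hj
        rw [List.append_cancel_left_eq] at h
        rw [ih h]
      · exact absurd (W_inj_aux h.symm hj) (by simp)

lemma pw_append_comm (m : ℕ) (a b : List α) :
    pw m (a ++ b) ++ a = a ++ pw m (b ++ a) := by
  induction m with
  | zero => simp
  | succ m ih => simp only [pw_succ, List.append_assoc, ih]

lemma rotate_pw {m t : ℕ} (hm : 0 < m) {l : List α} (ht : t ≤ l.length) :
    (pw m l).rotate t = pw m (l.rotate t) := by
  obtain ⟨m, rfl⟩ := Nat.exists_eq_succ_of_ne_zero hm.ne'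
  rw [List.rotate_eq_drop_append_take
      (by rw [length_pw]; exact le_trans ht (Nat.le_mul_of_pos_left _ m.succ_pos)),
    List.rotate_eq_drop_append_take ht]
  rw [pw_succ, List.drop_append_of_le_length ht, List.take_append_of_le_length ht]
  have key := pw_append_comm m (l.take t) (l.drop t)
  rw [List.take_append_drop] at key
  calc l.drop t ++ pw m l ++ l.take t
      = l.drop t ++ (pw m l ++ l.take t) := by rw [List.append_assoc]
    _ = l.drop t ++ (l.take t ++ pw m (l.drop t ++ l.take t)) := by rw [key]
    _ = pw (m+1) (l.drop t ++ l.take t) := by rw [pw_succ]; simp [List.append_assoc]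

lemma take_pw {m : ℕ} (hm : 0 < m) (l : List α) : (pw m l).take l.length = l := by
  obtain ⟨m, rfl⟩ := Nat.exists_eq_succ_of_ne_zero hm.ne'
  simp [List.take_left]

private lemma comm_pow_aux : ∀ (N : ℕ) (b a : List α), b.length ≤ N → a ≠ [] →
    a.length ∣ b.length → a ++ b = b ++ a → b = pw (b.length / a.length) a := by
  intro N
  induction N with
  | zero =>
    intro b a hN _ _ _
    have : b = [] := List.eq_nil_of_length_eq_zero (Nat.le_zero.mp hN)
    subst this; simp
  | succ N ih =>
    intro b a hN ha hdvd hcomm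
    rcases Nat.eq_zero_or_pos b.length with hb0 | hbpos
    · have : b = [] := List.eq_nil_of_length_eq_zero hb0
      subst this; simp
    · have hapos : 0 < a.length := List.length_pos_iff.mpr ha
      have hle : a.length ≤ b.length := Nat.le_of_dvd hbpos hdvd
      have hpref : a = b.take a.length := by
        have := congrArg (List.take a.length) hcomm
        rwa [List.take_append_of_le_length hle, List.take_left] at this
      set b' := b.drop a.length with hb'
      have hbsplit : b = a ++ b' := by
        conv_lhs => rw [← List.take_append_drop a.length b, ← hpref]
      have hcomm' : a ++ b' = b' ++ a := by
        have : a ++ (a ++ b') = a ++ (b' ++ a) := by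
          calc a ++ (a ++ b') = a ++ b := by rw [hbsplit]
            _ = b ++ a := hcomm
            _ = a ++ (b' ++ a) := by rw [hbsplit, List.append_assoc]
        exact List.append_cancel_left this
      have hlen' : b'.length = b.length - a.length := by simp [hb']
      have hdvd' : a.length ∣ b'.length := by
        rw [hlen']; exact Nat.dvd_sub hdvd dvd_rfl
      have hstep := ih b' a (by omega) ha hdvd' hcomm'
      have h1 : b.length / a.length = b'.length / a.length + 1 := by
        obtain ⟨c, hc⟩ := hdvd'
        have hbc : b.length = a.length * (c + 1) := by rw [hbsplit]; simp [hc]; ring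
        rw [hc, hbc, Nat.mul_div_cancel_left _ hapos, Nat.mul_div_cancel_left _ hapos]
      rw [h1, pw_succ, ← hstep, ← hbsplit]

lemma comm_pow (b a : List α) (ha : a ≠ []) (hdvd : a.length ∣ b.length)
    (hcomm : a ++ b = b ++ a) : b = pw (b.length / a.length) a :=
  comm_pow_aux b.length b a le_rfl ha hdvd hcomm

lemma rotate_mul {u : List α} {i : ℕ} (h : u.rotate i = u) (c : ℕ) : u.rotate (c * i) = u := by
  induction c with
  | zero => simp
  | succ c ih =>
    have : u.rotate (c * i + i) = u := by
      rw [← List.rotate_rotate, ih, h]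
    simpa [Nat.succ_mul] using this

lemma rotate_gcd {u : List α} : ∀ i j : ℕ, u.rotate i = u → u.rotate j = u →
    u.rotate (Nat.gcd i j) = u := by
  intro i j
  induction i, j using Nat.gcd.induction with
  | H0 j => intro _ hj; simpa using hj
  | H1 i j hi ih =>
    intro h1 h2
    rw [Nat.gcd_rec]
    refine ih ?_ h1
    have hq : u.rotate (j / i * i) = u := rotate_mul h1 (j / i)
    have h4 : j / i * i + j % i = j := by
      conv_rhs => rw [← Nat.div_add_mod j i]
      ring
    rw [← h4, ← List.rotate_rotate, hq] at h2
    exact h2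

lemma prim_decomp (u : List α) (hu : u ≠ []) :
    ∃ g, 0 < g ∧ g ≤ u.length ∧ g ∣ u.length ∧ 0 < u.length / g ∧
      u = pw (u.length / g) (u.take g) ∧ Prim (u.take g) ∧
      ∀ (s : List α) (m' : ℕ), 0 < m' → Prim s → u = pw m' s →
        s = u.take g ∧ s.length = g ∧ m' = u.length / g := by
  classical
  have hn : 0 < u.length := List.length_pos_iff.mpr hu
  have hex : ∃ i, 0 < i ∧ u.rotate i = u := ⟨u.length, hn, List.rotate_length u⟩
  set g := Nat.find hex with hgdef
  obtain ⟨hg0, hgrot⟩ := Nat.find_spec hex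
  have hmin : ∀ j, 0 < j → u.rotate j = u → g ≤ j := fun j h1 h2 => Nat.find_min' hex ⟨h1, h2⟩
  have hgle : g ≤ u.length := hmin u.length hn (List.rotate_length u)
  have hgdvd : g ∣ u.length := by
    have h1 : u.rotate (Nat.gcd g u.length) = u := rotate_gcd g u.length hgrot (List.rotate_length u)
    have h2 : 0 < Nat.gcd g u.length := Nat.gcd_pos_of_pos_left _ hg0
    have h3 : g ≤ Nat.gcd g u.length := hmin _ h2 h1
    have h4 : Nat.gcd g u.length ≤ g := Nat.gcd_le_left _ hg0
    have : Nat.gcd g u.length = g := le_antisymm h4 h3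
    rw [← this]; exact Nat.gcd_dvd_right _ _
  set a := u.take g with hadef
  have hal : a.length = g := by simp [hadef, hgle]
  have hane : a ≠ [] := by
    intro h; rw [h] at hal; simp at hal; omega
  have hcomm : a ++ u.drop g = u.drop g ++ a := by
    have h1 : a ++ u.drop g = u := List.take_append_drop g u
    have h2 : u.drop g ++ a = u := by
      rw [← List.rotate_eq_drop_append_take hgle]; exact hgrot
    rw [h1, h2]
  have hdl : (u.drop g).length = u.length - g := by simp
  have hdvd' : a.length ∣ (u.drop g).length := by
    rw [hal, hdl]; exact Nat.dvd_sub hgdvd dvd_rfl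
  have hb := comm_pow (u.drop g) a hane hdvd' hcomm
  obtain ⟨q, hq⟩ := hgdvd
  have hq1 : 0 < q := by
    rcases Nat.eq_zero_or_pos q with h | h
    · rw [h, Nat.mul_zero] at hq; omega
    · exact h
  have hnq : u.length / g = q := by rw [hq, Nat.mul_div_cancel_left _ hg0]
  have hdq : (u.drop g).length / a.length = q - 1 := by
    rw [hal, hdl, hq]
    have h7 : g * q - g = g * (q - 1) := (Nat.mul_pred g q).symm
    rw [h7, Nat.mul_div_cancel_left _ hg0]
  have hdecomp : u = pw (u.length / g) a := by
    conv_lhs => rw [← List.take_append_drop g u, ← hadef, hb, hdq]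
    rw [hnq]
    have : q = (q - 1) + 1 := by omega
    rw [this, pw_succ]
    norm_num
  have hprim : Prim a := by
    intro t ht0 htlt heq
    have : u.rotate t = u := by
      conv_lhs => rw [hdecomp, rotate_pw (by omega) (by omega : t ≤ a.length), heq]
      exact hdecomp.symm
    exact absurd (hmin t ht0 this) (by rw [hal] at htlt; omega)
  refine ⟨g, hg0, hgle, ⟨q, hq⟩, by omega, hdecomp, hprim, ?_⟩
  intro s m' hm' hsprim hus
  have hsne : s ≠ [] := by
    intro h; rw [h, pw_nil] at hus; exact hu hus
  have hsl : 0 < s.length := List.length_pos_iff.mpr hsne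
  have hlen : u.length = m' * s.length := by rw [hus, length_pw]
  have hrots : u.rotate s.length = u := by
    conv_lhs => rw [hus, rotate_pw hm' le_rfl, List.rotate_length]
    rw [hus]
  have hgs : g ≤ s.length := hmin _ hsl hrots
  have hstake : s = u.take s.length := by rw [hus, take_pw hm']
  have hgeq : s.length = g := by
    by_contra hne
    have hglt : g < s.length := by omega
    have hsrot : s.rotate g = s := by
      rcases Nat.lt_or_ge m' 2 with hm2 | hm2
      · have : m' = 1 := by omega
        rw [this, pw_one] at hus
        rw [← hus]
        exact hgrot
      · have hsl2 : s.length + g < u.length := by nlinarith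
        have hu2 : u = s ++ (s ++ pw (m' - 2) s) := by
          rw [hus]
          have : m' = (m' - 2) + 1 + 1 := by omega
          conv_lhs => rw [this, pw_succ, pw_succ]
        have hdropg : u.drop g = s.drop g ++ (s ++ pw (m' - 2) s) := by
          conv_lhs => rw [hu2]
          exact List.drop_append_of_le_length (by omega)
        have htk : (u.rotate g).take s.length = s.rotate g := by
          rw [List.rotate_eq_drop_append_take (by omega),
            List.take_append_of_le_length (by simp; omega), hdropg,
            List.take_append]
          have h5 : (s.drop g).length = s.length - g := by simp
          rw [List.take_of_length_le (show (List.drop g s).length ≤ s.length by rw [h5]; omega),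
            h5]
          have h6 : s.length - (s.length - g) = g := by omega
          rw [h6, List.take_append_of_le_length (by omega),
            List.rotate_eq_drop_append_take (by omega)]
        rw [hgrot, ← hstake] at htk
        exact htk.symm
    exact hsprim g hg0 (by omega) hsrot
  refine ⟨by rw [hstake, hgeq], hgeq, ?_⟩
  have : u.length = m' * g := by rw [← hgeq]; exact hlen
  rw [this, Nat.mul_div_cancel _ hg0]

lemma prim_rotate {r : List α} (h : Prim r) (s : ℕ) : Prim (r.rotate s) := by
  rcases Nat.eq_zero_or_pos r.length with h0 | h0
  · intro i hi0 hilt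
    simp [List.length_rotate] at hilt; omega
  intro i hi0 hilt heq
  rw [List.length_rotate] at hilt
  set s' := s % r.length with hs'
  have hs'lt : s' < r.length := Nat.mod_lt _ h0
  have hra : r.rotate s = r.rotate s' := (List.rotate_mod r s).symm
  have hr : r = (r.rotate s).rotate (r.length - s') := by
    rw [hra, List.rotate_rotate]
    have : s' + (r.length - s') = r.length := by omega
    rw [this, List.rotate_length]
  have : r.rotate i = r := by
    conv_lhs => rw [hr, List.rotate_rotate]
    have harr : r.length - s' + i = i + (r.length - s') := by omega
    rw [harr, ← List.rotate_rotate, heq, ← hr]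
  exact h i hi0 hilt this

lemma head?_rotate {l : List α} {i : ℕ} (h : i < l.length) :
    (l.rotate i).head? = l[i]? := by
  rw [List.rotate_eq_drop_append_take h.le,
    List.head?_append_of_ne_nil _ (by rw [Ne, List.drop_eq_nil_iff]; omega),
    List.head?_drop]

lemma head_lt {a b : List Bool} (ha : a.head? = some false) (hb : b.head? = some true) :
    a < b := by
  cases a with
  | nil => simp at ha
  | cons x t =>
    cases b with
    | nil => simp at hb
    | cons y s =>
      simp at ha hb
      subst ha; subst hb
      exact List.Lex.rel (by decide)

lemma lyndon_prim {w : List Bool} (h : IsLyndon w) : Prim w := by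
  intro i hi0 hilt heq
  have := h i hi0 hilt
  rw [heq] at this
  exact lt_irrefl _ this

lemma lyndon_exists {r : List Bool} (hr : Prim r) (hne : r ≠ []) :
    ∃ s, s < r.length ∧ IsLyndon (r.rotate s) := by
  have hn : 0 < r.length := List.length_pos_iff.mpr hne
  obtain ⟨s, hs, hsmin⟩ := Finset.exists_min_image (Finset.range r.length)
    (fun i => r.rotate i) ⟨0, Finset.mem_range.mpr hn⟩
  refine ⟨s, Finset.mem_range.mp hs, ?_⟩
  intro i hi0 hilt
  rw [List.length_rotate] at hilt
  have h1 : (r.rotate s).rotate i = r.rotate ((s + i) % r.length) := by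
    rw [List.rotate_rotate, List.rotate_mod]
  have hle : r.rotate s ≤ r.rotate ((s + i) % r.length) :=
    hsmin _ (Finset.mem_range.mpr (Nat.mod_lt _ hn))
  rw [h1]
  refine lt_of_le_of_ne hle ?_
  intro heq
  rw [← h1] at heq
  exact prim_rotate hr s i hi0 (by rw [List.length_rotate]; exact hilt) heq.symm

lemma lyndon_head {w : List Bool} (h : IsLyndon w) (hf : false ∈ w) :
    w.head? = some false := by
  cases hw : w with
  | nil => subst hw; simp at hf
  | cons x t =>
    cases x with
    | false => simp [hw]
    | true =>
      exfalso
      subst hw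
      obtain ⟨i, hilt, hival⟩ := List.getElem_of_mem hf
      have hi0 : 0 < i := by
        rcases Nat.eq_zero_or_pos i with h0 | h0
        · subst h0; simp at hival
        · exact h0
      have h2 := h i hi0 hilt
      have hrothead : ((true :: t).rotate i).head? = some false := by
        rw [head?_rotate hilt, List.getElem?_eq_getElem hilt, hival]
      exact absurd (head_lt hrothead (by simp)) (not_lt.mpr (le_of_lt h2))

lemma lyndon_unique {w w' : List Bool} (hw : IsLyndon w) (hw' : IsLyndon w')
    (a : ℕ) (h : w' = w.rotate a) : w = w' := by
  have hlen : w'.length = w.length := by rw [h, List.length_rotate]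
  rcases Nat.eq_zero_or_pos w.length with h0 | h0
  · have e1 : w = [] := List.eq_nil_of_length_eq_zero h0
    have e2 : w' = [] := List.eq_nil_of_length_eq_zero (by omega)
    rw [e1, e2]
  set a' := a % w.length with ha'
  have ha'lt : a' < w.length := Nat.mod_lt _ h0
  have hw'2 : w' = w.rotate a' := by rw [h, ha', List.rotate_mod]
  rcases Nat.eq_zero_or_pos a' with haz | hapos
  · rw [hw'2, haz, List.rotate_zero]
  · exfalso
    have h1 : w < w' := by rw [hw'2]; exact hw a' hapos ha'lt
    have h2 : w' < w := by
      have := hw' (w.length - a') (by omega) (by omega)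
      rw [hw'2, List.rotate_rotate] at this
      have he : a' + (w.length - a') = w.length := by omega
      rw [he, List.rotate_length] at this
      rw [hw'2]
      exact this
    exact lt_asymm h1 h2

lemma chain'_replicate_true (j : ℕ) :
    (List.replicate j true).Chain' (fun a b : Bool => a = true ∨ b = true) := by
  induction j with
  | zero => exact List.isChain_nil
  | succ m ihm =>
    rw [List.replicate_succ]
    exact List.isChain_cons.mpr ⟨fun y _ => Or.inl rfl, ihm⟩

lemma chain'_W {c : List ℕ} (hc : ∀ j ∈ c, 1 ≤ j) :
    (W c).Chain' (fun a b => a = true ∨ b = true) := by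
  induction c with
  | nil => exact List.isChain_nil
  | cons j c ih =>
    have hj : 1 ≤ j := hc j (by simp)
    have hch : (List.replicate j true ++ W c).Chain' (fun a b => a = true ∨ b = true) := by
      apply List.isChain_append.mpr
      refine ⟨?_, ih (fun x hx => hc x (by simp [hx])), ?_⟩
      · exact chain'_replicate_true j
      · intro x hx y _
        left
        exact List.eq_of_mem_replicate (List.mem_of_mem_getLast? hx)
    rw [W_cons]
    refine List.isChain_cons.mpr ⟨?_, hch⟩
    intro y hy
    obtain ⟨j', rfl⟩ := Nat.exists_eq_succ_of_ne_zero (by omega : j ≠ 0)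
    rw [List.replicate_succ, List.cons_append, List.head?_cons] at hy
    simp only [Option.mem_def, Option.some.injEq] at hy
    exact Or.inr hy.symm

lemma no00_W {c : List ℕ} (hc : ∀ j ∈ c, 1 ≤ j) : ¬ [false, false] <:+: W c := by
  intro h
  have := (chain'_W hc).infix h
  simp [List.isChain_cons_cons] at this

lemma boundary : ∀ (c : List ℕ) (s : ℕ), (W c)[s]? = some false →
    ∃ i, i < c.length ∧ s = (W (c.take i)).length := by
  intro c
  induction c with
  | nil => intro s h; simp [W] at h
  | cons j c ih =>
    intro s h
    rw [W_cons] at h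
    cases s with
    | zero => exact ⟨0, by simp, by simp⟩
    | succ s =>
      rw [List.getElem?_cons_succ] at h
      rcases Nat.lt_or_ge s j with hs | hs
      · rw [List.getElem?_append_left (by simpa using hs)] at h
        rw [List.getElem?_replicate_of_lt hs] at h
        simp at h
      · rw [List.getElem?_append_right (by simpa using hs)] at h
        simp only [List.length_replicate] at h
        obtain ⟨i, hilt, hieq⟩ := ih (s - j) h
        refine ⟨i + 1, by simpa using hilt, ?_⟩
        rw [length_W] at hieq
        have h1 : (j :: c).take (i+1) = j :: c.take i := by simp
        rw [h1, length_W]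
        simp only [List.length_cons, List.sum_cons]
        omega

lemma rotate_append_length (x y : List α) : (x ++ y).rotate x.length = y ++ x := by
  rw [List.rotate_eq_drop_append_take (by simp), List.drop_left, List.take_left]

lemma W_rotate {b : List ℕ} {i : ℕ} (h : i ≤ b.length) :
    W (b.rotate i) = (W b).rotate ((W (b.take i)).length) := by
  conv_lhs => rw [List.rotate_eq_drop_append_take h, W_append]
  have hsplit : W b = W (b.take i) ++ W (b.drop i) := by
    rw [← W_append, List.take_append_drop]
  rw [hsplit, rotate_append_length]

lemma W_take_lt {b : List ℕ} {i i' : ℕ} (h : i < i') (h' : i' ≤ b.length) :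
    (W (b.take i)).length < (W (b.take i')).length := by
  have h1 : (b.take i).length = i := List.length_take_of_le (by omega)
  have h2 : (b.take i').length = i' := List.length_take_of_le h'
  have h3 : (b.take i).sum ≤ (b.take i').sum := by
    have hpre : b.take i = (b.take i').take i := by rw [List.take_take]; congr 1; omega
    rw [hpre]
    exact ((List.take_prefix i _).sublist).sum_le_sum (by simp)
  rw [length_W, length_W, h1, h2]
  omega

lemma W_take_lt_full {b : List ℕ} {i : ℕ} (h : i < b.length) :
    (W (b.take i)).length < (W b).length := by
  have := W_take_lt h (le_refl b.length)
  rwa [List.take_length] at this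

lemma head?_pw {m : ℕ} (hm : 0 < m) {l : List α} (hl : l ≠ []) :
    (pw m l).head? = l.head? := by
  obtain ⟨m, rfl⟩ := Nat.exists_eq_succ_of_ne_zero hm.ne'
  rw [pw_succ, List.head?_append_of_ne_nil _ hl]

lemma mem_pw {m : ℕ} {l : List α} {x : α} (h : x ∈ pw m l) : x ∈ l := by
  induction m with
  | zero => simp at h
  | succ m ih =>
    rw [pw_succ, List.mem_append] at h
    exact h.elim id ih

lemma sum_pw (m : ℕ) (l : List ℕ) : (pw m l).sum = m * l.sum := by
  induction m with
  | zero => simp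
  | succ m ih => simp [ih, Nat.succ_mul, Nat.add_comm]

/-- Bump the first part. -/
def bump : List ℕ → List ℕ
  | [] => []
  | j :: r => (j + 1) :: r

/-- All lists `c` of parts `≥ 1` with `c.length + c.sum = m`
(compositions of `m` into parts `≥ 2`, shifted). -/
def comps : ℕ → List (List ℕ)
  | 0 => [[]]
  | 1 => []
  | (m + 2) => (comps (m + 1)).map bump ++ (comps m).map (fun c => 1 :: c)

lemma mem_comps : ∀ m c, c ∈ comps m ↔ (∀ j ∈ c, 1 ≤ j) ∧ c.length + c.sum = m := by
  intro m
  induction m using Nat.strong_induction_on with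
  | _ m ih =>
    match m with
    | 0 =>
      intro c
      constructor
      · intro h
        simp [comps] at h
        subst h; simp
      · intro ⟨h1, h2⟩
        have : c = [] := by
          cases c with
          | nil => rfl
          | cons x t => simp at h2
        simp [comps, this]
    | 1 =>
      intro c
      constructor
      · intro h; simp [comps] at h
      · intro ⟨h1, h2⟩
        exfalso
        cases c with
        | nil => simp at h2
        | cons x t =>
          have := h1 x (by simp)
          simp at h2
          omega
    | (m + 2) =>
      intro c
      constructor
      · intro h
        simp only [comps, List.mem_append, List.mem_map] at h
        rcases h with ⟨c', hc', rfl⟩ | ⟨c', hc', rfl⟩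
        · rw [ih (m + 1) (by omega)] at hc'
          obtain ⟨h1, h2⟩ := hc'
          cases c' with
          | nil => simp at h2
          | cons j r =>
            simp only [bump]
            constructor
            · intro x hx
              rcases List.mem_cons.mp hx with rfl | hx
              · omega
              · exact h1 x (by simp [hx])
            · simp at h2 ⊢
              omega
        · rw [ih m (by omega)] at hc'
          obtain ⟨h1, h2⟩ := hc'
          constructor
          · intro x hx
            rcases List.mem_cons.mp hx with rfl | hx
            · omega
            · exact h1 x hx
          · simp
            omega
      · intro ⟨h1, h2⟩
        cases c with
        | nil => simp at h2
        | cons j r =>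
          simp only [List.length_cons, List.sum_cons] at h2
          have hj : 1 ≤ j := h1 j (by simp)
          simp only [comps, List.mem_append, List.mem_map]
          rcases Nat.lt_or_ge j 2 with hj2 | hj2
          · have hj1 : j = 1 := by omega
            right
            refine ⟨r, ?_, by rw [hj1]⟩
            rw [ih m (by omega)]
            exact ⟨fun x hx => h1 x (by simp [hx]), by omega⟩
          · left
            refine ⟨(j - 1) :: r, ?_, ?_⟩
            · rw [ih (m + 1) (by omega)]
              constructor
              · intro x hx
                rcases List.mem_cons.mp hx with rfl | hx
                · omega
                · exact h1 x (by simp [hx])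
              · simp; omega
            · simp [bump]; omega

lemma nodup_comps : ∀ m, (comps m).Nodup := by
  intro m
  induction m using Nat.strong_induction_on with
  | _ m ih =>
    match m with
    | 0 => simp [comps]
    | 1 => simp [comps]
    | (m + 2) =>
      simp only [comps]
      refine List.Nodup.append ?_ ?_ ?_
      · refine List.Nodup.map_on ?_ (ih (m + 1) (by omega))
        intro x hx y hy hxy
        rw [mem_comps] at hx hy
        cases x with
        | nil => simp at hx
        | cons a r =>
          cases y with
          | nil => simp at hy
          | cons b s =>
            simp only [bump, List.cons.injEq] at hxy
            simp only [List.cons.injEq]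
            exact ⟨by omega, hxy.2⟩
      · exact List.Nodup.map_on (fun x _ y _ h => by simpa using h) (ih m (by omega))
      · intro c h1 h2
        simp only [List.mem_map] at h1 h2
        obtain ⟨c1, hc1, rfl⟩ := h1
        obtain ⟨c2, hc2, hc⟩ := h2
        rw [mem_comps] at hc1 hc2
        cases c1 with
        | nil => simp at hc1
        | cons a r =>
          have ha := hc1.1 a (by simp)
          simp [bump] at hc
          omega

lemma length_comps : ∀ m, (comps (m + 1)).length = Nat.fib m := by
  intro m
  induction m using Nat.strong_induction_on with
  | _ m ih =>
    match m with
    | 0 => simp [comps]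
    | 1 => simp [comps, Nat.fib]
    | (m + 2) =>
      show (comps (m + 1 + 2)).length = Nat.fib (m + 2)
      rw [show comps (m + 1 + 2) = (comps (m + 2)).map bump ++
        (comps (m + 1)).map (fun c => 1 :: c) from rfl]
      rw [List.length_append, List.length_map, List.length_map,
        ih (m + 1) (by omega), ih m (by omega), Nat.fib_add_two]
      omega

lemma count_eq_length_filter (l : List ℕ) (x : ℕ) :
    ((List.range l.length).filter (fun i => l[i]? = some x)).length = l.count x := by
  induction l with
  | nil => simp
  | cons a t ih =>
    rw [List.length_cons, List.range_succ_eq_map, List.filter_cons, List.filter_map]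
    have hcong : List.filter ((fun i => decide ((a :: t)[i]? = some x)) ∘ Nat.succ)
        (List.range t.length) = List.filter (fun i => decide (t[i]? = some x))
        (List.range t.length) := by
      apply List.filter_congr
      intro i _
      simp
    rw [hcong]
    by_cases hax : a = x
    · subst hax
      simp [List.count_cons, ih]
    · simp [List.count_cons, ih, hax]

lemma one_le_sum {l : List ℕ} (hne : l ≠ []) (h : ∀ j ∈ l, 1 ≤ j) : 1 ≤ l.sum := by
  cases l with
  | nil => exact absurd rfl hne
  | cons x t =>
    have := h x (by simp)
    simp
    omega

/-- The map sending a marked block occurrence to the associated composition of `n`. -/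
def PhiMap (n : ℕ) (f : List Bool → List ℕ) (p : List Bool × ℕ) : List ℕ :=
  pw (n / p.1.length) ((f p.1).rotate p.2)

lemma main (n k : ℕ) (hn : 2 ≤ n) (hk : 2 ≤ k)
    (hkn : k ≤ n - 1)
    (L : List (List Bool)) (hnd : L.Nodup)
    (hmem : ∀ w, w ∈ L ↔
      IsLyndon w ∧ w.length ∣ n ∧ 2 ≤ w.length ∧ false ∈ w ∧
        ¬ [false, false] <:+: w)
    (f : List Bool → List ℕ)
    (hf : ∀ w ∈ L, (∀ j ∈ f w, 1 ≤ j) ∧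
      w = ((f w).map fun j => false :: List.replicate j true).flatten) :
    (L.map fun w => (f w).count (k - 1)).sum = Nat.fib (n - k - 1) := by
  classical
  have hn0 : 0 < n := by omega
  set P : List (List Bool × ℕ) := L.flatMap (fun w =>
    ((List.range (f w).length).filter (fun i => (f w)[i]? = some (k - 1))).map
      (fun i => (w, i))) with hPdef
  have hmemP : ∀ w i, (w, i) ∈ P ↔
      w ∈ L ∧ i < (f w).length ∧ (f w)[i]? = some (k - 1) := by
    intro w i
    rw [hPdef]
    simp only [List.mem_flatMap, List.mem_map, List.mem_filter, List.mem_range,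
      decide_eq_true_eq, Prod.mk.injEq]
    constructor
    · rintro ⟨a, haL, j, ⟨hjlt, hjval⟩, rfl, rfl⟩
      exact ⟨haL, hjlt, hjval⟩
    · rintro ⟨hwL, hilt, hival⟩
      exact ⟨w, hwL, i, ⟨hilt, hival⟩, rfl, rfl⟩
  have hsum : (L.map fun w => (f w).count (k - 1)).sum = P.length := by
    rw [hPdef, List.length_flatMap]
    congr 1
    apply List.map_congr_left
    intro w _
    show (f w).count (k - 1) = _
    simp only [Function.comp, List.length_map]
    exact (count_eq_length_filter (f w) (k - 1)).symm
  -- Forward property of the map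
  have hA : ∀ p ∈ P, (∀ j ∈ PhiMap n f p, 1 ≤ j) ∧
      (PhiMap n f p).length + (PhiMap n f p).sum = n ∧
      (PhiMap n f p).head? = some (k - 1) := by
    rintro ⟨w, i⟩ hp
    obtain ⟨hwL, hilt, hival⟩ := (hmemP w i).mp hp
    have hwW : w = W (f w) := (hf w hwL).2
    have hfpos := (hf w hwL).1
    obtain ⟨hly, hdvd, h2le, -, -⟩ := (hmem w).mp hwL
    have hmd : n / w.length * w.length = n := Nat.div_mul_cancel hdvd
    have hm1 : 0 < n / w.length := by
      rcases Nat.eq_zero_or_pos (n / w.length) with h | h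
      · rw [h] at hmd; omega
      · exact h
    have hdW : w.length = (f w).length + (f w).sum := by
      conv_lhs => rw [hwW]
      exact length_W _
    have hrne : (f w).rotate i ≠ [] := by
      apply List.ne_nil_of_length_pos
      rw [List.length_rotate]; omega
    refine ⟨?_, ?_, ?_⟩
    · intro j hj
      exact hfpos j (List.mem_rotate.mp (mem_pw hj))
    · show (pw (n / w.length) ((f w).rotate i)).length +
        (pw (n / w.length) ((f w).rotate i)).sum = n
      rw [length_pw, sum_pw, List.length_rotate, (List.rotate_perm (f w) i).sum_eq,
        ← Nat.left_distrib, ← hdW]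
      exact hmd
    · show (pw (n / w.length) ((f w).rotate i)).head? = some (k - 1)
      rw [head?_pw hm1 hrne, head?_rotate hilt, hival]
  -- Injectivity
  have hB : ∀ p ∈ P, ∀ q ∈ P, PhiMap n f p = PhiMap n f q → p = q := by
    rintro ⟨w, i⟩ hp ⟨w', i'⟩ hq hpq
    obtain ⟨hwL, hilt, hival⟩ := (hmemP w i).mp hp
    obtain ⟨hwL', hilt', hival'⟩ := (hmemP w' i').mp hq
    have hwW : w = W (f w) := (hf w hwL).2
    have hwW' : w' = W (f w') := (hf w' hwL').2
    obtain ⟨hly, hdvd, h2le, -, -⟩ := (hmem w).mp hwL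
    obtain ⟨hly', hdvd', h2le', -, -⟩ := (hmem w').mp hwL'
    have hmd : n / w.length * w.length = n := Nat.div_mul_cancel hdvd
    have hmd' : n / w'.length * w'.length = n := Nat.div_mul_cancel hdvd'
    have hm1 : 0 < n / w.length := by
      rcases Nat.eq_zero_or_pos (n / w.length) with h | h
      · rw [h] at hmd; omega
      · exact h
    have hm1' : 0 < n / w'.length := by
      rcases Nat.eq_zero_or_pos (n / w'.length) with h | h
      · rw [h] at hmd'; omega
      · exact h
    obtain ⟨t, ht⟩ : ∃ x, x = (W ((f w).take i)).length := ⟨_, rfl⟩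
    obtain ⟨t', ht'⟩ : ∃ x, x = (W ((f w').take i')).length := ⟨_, rfl⟩
    obtain ⟨U, hU⟩ : ∃ U, U = W (PhiMap n f (w, i)) := ⟨_, rfl⟩
    have hlw : w.length = (W (f w)).length := congrArg List.length hwW
    have hlw' : w'.length = (W (f w')).length := congrArg List.length hwW'
    have htlt : t < w.length := by
      rw [ht, hlw]
      exact W_take_lt_full hilt
    have ht'lt : t' < w'.length := by
      rw [ht', hlw']
      exact W_take_lt_full hilt'
    have hU1 : U = pw (n / w.length) (w.rotate t) := by
      rw [hU]
      show W (pw (n / w.length) ((f w).rotate i)) = _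
      rw [W_pw, W_rotate (le_of_lt hilt), ← ht, ← hwW]
    have hU1' : U = pw (n / w'.length) (w'.rotate t') := by
      rw [hU, hpq]
      show W (pw (n / w'.length) ((f w').rotate i')) = _
      rw [W_pw, W_rotate (le_of_lt hilt'), ← ht', ← hwW']
    have hUne : U ≠ [] := by
      apply List.ne_nil_of_length_pos
      rw [hU1, length_pw, List.length_rotate]
      omega
    obtain ⟨g, hg0, hgle, hgdvd, hM0, hdec, hprimg, huniq⟩ := prim_decomp U hUne
    have h1 := huniq (w.rotate t) (n / w.length) hm1 (prim_rotate (lyndon_prim hly) t) hU1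
    have h1' := huniq (w'.rotate t') (n / w'.length) hm1'
      (prim_rotate (lyndon_prim hly') t') hU1'
    have hr0 : w.rotate t = w'.rotate t' := by rw [h1.1, h1'.1]
    have hdd : w.length = w'.length := by
      have := congrArg List.length hr0
      simpa using this
    have hww' : w = w' := by
      refine lyndon_unique hly hly' (t + (w'.length - t')) ?_
      calc w' = (w'.rotate t').rotate (w'.length - t') := by
            rw [List.rotate_rotate, show t' + (w'.length - t') = w'.length by omega,
              List.rotate_length]
        _ = (w.rotate t).rotate (w'.length - t') := by rw [hr0]
        _ = w.rotate (t + (w'.length - t')) := List.rotate_rotate _ _ _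
    subst hww'
    have hrot : w.rotate t = w.rotate t' := hr0
    have hprw : Prim w := lyndon_prim hly
    have hback : w.rotate (t + (w.length - t')) = w := by
      rw [← List.rotate_rotate, hrot, List.rotate_rotate,
        show t' + (w.length - t') = w.length by omega, List.rotate_length]
    have hteq : t = t' := by
      rcases lt_trichotomy t t' with hlt | heq | hgt
      · exact absurd hback (hprw (t + (w.length - t')) (by omega) (by omega))
      · exact heq
      · exfalso
        have h4 : w.rotate (w.length + (t - t')) = w := by
          rw [show w.length + (t - t') = t + (w.length - t') by omega]
          exact hback
        rw [← List.rotate_rotate, List.rotate_length] at h4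
        exact absurd h4 (hprw (t - t') (by omega) (by omega))
    have hieq : i = i' := by
      rcases lt_trichotomy i i' with h | h | h
      · have := W_take_lt h (le_of_lt hilt')
        rw [← ht, ← ht'] at this
        omega
      · exact h
      · have := W_take_lt h (le_of_lt hilt)
        rw [← ht', ← ht] at this
        omega
    rw [hieq]
  -- Surjectivity
  have hC : ∀ C : List ℕ, (∀ j ∈ C, 1 ≤ j) → C.length + C.sum = n →
      C.head? = some (k - 1) → ∃ p ∈ P, PhiMap n f p = C := by
    intro C hCpos hClen hChead
    have hCne : C ≠ [] := by
      intro h; rw [h] at hChead; simp at hChead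
    set u := W C with hu
    have hulen : u.length = n := by rw [hu, length_W, hClen]
    have hune : u ≠ [] := List.ne_nil_of_length_pos (by omega)
    obtain ⟨g, hg0, hgle, hgdvd, hM0, hdec, hprimg, huniq⟩ := prim_decomp u hune
    set r := u.take g with hr
    have hrlen : r.length = g := by
      rw [hr]; exact List.length_take_of_le hgle
    have hrne : r ≠ [] := List.ne_nil_of_length_pos (by omega)
    have hex0 : ∃ i₀, i₀ ≤ C.length ∧ r = W (C.take i₀) := by
      by_cases hgn : g = u.length
      · refine ⟨C.length, le_rfl, ?_⟩
        rw [hr, hgn, List.take_length, List.take_length, hu]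
      · have hglt : g < u.length := by omega
        have hrr : r.rotate g = r := by
          conv_lhs => rw [← hrlen, List.rotate_length]
        have hrotg : u.rotate g = u := by
          conv_lhs => rw [hdec, rotate_pw hM0 (le_of_eq hrlen.symm), hrr]
          exact hdec.symm
        have hgfalse : u[g]? = some false := by
          rw [← head?_rotate (by omega : g < u.length), hrotg, hu, W_head? C hCne]
        obtain ⟨i₀, hi₀lt, hi₀eq⟩ := boundary C g (by rw [← hu]; exact hgfalse)
        refine ⟨i₀, le_of_lt hi₀lt, ?_⟩
        rw [hr, hu, hi₀eq]
        conv_lhs => rw [show W C = W (C.take i₀) ++ W (C.drop i₀) by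
          rw [← W_append, List.take_append_drop]]
        rw [List.take_left]
    obtain ⟨i₀, hi₀le, hrW⟩ := hex0
    set b₀ := C.take i₀ with hb₀
    have hb₀ne : b₀ ≠ [] := by
      intro h
      have := hrlen
      rw [hrW, h] at this
      simp at this
      omega
    have hb₀pos : ∀ j ∈ b₀, 1 ≤ j := fun j hj => hCpos j (List.take_subset _ _ hj)
    obtain ⟨s, hslt, hly⟩ := lyndon_exists hprimg hrne
    set w := r.rotate s with hw
    have hex1 : ∃ i₁, i₁ ≤ b₀.length ∧ s = (W (b₀.take i₁)).length ∧
        w = W (b₀.rotate i₁) := by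
      by_cases hs0 : s = 0
      · refine ⟨0, Nat.zero_le _, by simp [hs0], ?_⟩
        rw [hw, hs0, List.rotate_zero, List.rotate_zero]
        exact hrW
      · have hwhead : w.head? = some false := by
          apply lyndon_head hly
          rw [hw, List.mem_rotate, hrW]
          exact false_mem_W hb₀ne
        have hsf : r[s]? = some false := by
          rw [← head?_rotate hslt, ← hw, hwhead]
        obtain ⟨i₁, hi₁lt, hi₁eq⟩ := boundary b₀ s (by rw [← hrW]; exact hsf)
        refine ⟨i₁, le_of_lt hi₁lt, hi₁eq, ?_⟩
        rw [hw, hrW, W_rotate (le_of_lt hi₁lt), ← hi₁eq]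
    obtain ⟨i₁, hi₁le, hi₁eq, hwW⟩ := hex1
    set b := b₀.rotate i₁ with hb
    have hblen : b.length = b₀.length := List.length_rotate _ _
    have hbpos : ∀ j ∈ b, 1 ≤ j := fun j hj => hb₀pos j (List.mem_rotate.mp hj)
    have hbne : b ≠ [] :=
      List.ne_nil_of_length_pos (by rw [hblen]; exact List.length_pos_iff.mpr hb₀ne)
    have hwlen : w.length = g := by rw [hw, List.length_rotate, hrlen]
    have hwlen2 : 2 ≤ w.length := by
      rw [hwW, length_W]
      have h1 : 1 ≤ b.length := List.length_pos_iff.mpr hbne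
      have h2 : 1 ≤ b.sum := one_le_sum hbne hbpos
      omega
    have hwdvd : w.length ∣ n := by
      rw [hwlen, ← hulen]
      exact hgdvd
    have hwmem : w ∈ L := (hmem w).mpr ⟨hly, hwdvd, hwlen2,
      by rw [hwW]; exact false_mem_W hbne, by rw [hwW]; exact no00_W hbpos⟩
    have hfw : f w = b := by
      apply W_inj
      have h9 : w = W (f w) := (hf w hwmem).2
      rw [← h9]
      exact hwW
    set i := (b.length - i₁) % b.length with hi
    have hb0 : 0 < b.length := List.length_pos_iff.mpr hbne
    have hilt : i < b.length := Nat.mod_lt _ hb0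
    have hbrot : b.rotate i = b₀ := by
      rw [hi, List.rotate_mod]
      conv_lhs => rw [hb]
      rw [List.rotate_rotate, show i₁ + (b.length - i₁) = b₀.length by
        rw [hblen]; omega]
      exact List.rotate_length b₀
    have hgetb : b[i]? = some (k - 1) := by
      rw [← head?_rotate hilt, hbrot, hb₀]
      obtain ⟨z, hz⟩ := Nat.exists_eq_succ_of_ne_zero (show i₀ ≠ 0 by
        rintro rfl
        rw [hb₀] at hb₀ne
        simp at hb₀ne)
      cases C with
      | nil => exact absurd rfl hCne
      | cons x tl =>
        rw [hz, List.take_succ_cons, List.head?_cons]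
        simpa using hChead
    refine ⟨(w, i), (hmemP w i).mpr ⟨hwmem, by rw [hfw]; exact hilt,
      by rw [hfw]; exact hgetb⟩, ?_⟩
    apply W_inj
    show W (pw (n / w.length) ((f w).rotate i)) = W C
    rw [hfw, hbrot, W_pw, ← hrW, hwlen, ← hulen, ← hdec, hu]
  -- Nodup of P
  have hPn : P.Nodup := by
    rw [hPdef, List.nodup_flatMap]
    constructor
    · intro w _
      exact List.Nodup.map_on (fun x _ y _ h => by simpa using h)
        (List.Nodup.filter _ List.nodup_range)
    · refine List.Pairwise.imp ?_ hnd
      intro w1 w2 hne x hx1 hx2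
      simp only [List.mem_map] at hx1 hx2
      obtain ⟨j1, -, h1⟩ := hx1
      obtain ⟨j2, -, h2⟩ := hx2
      apply hne
      rw [← h1] at h2
      exact (congrArg Prod.fst h2).symm
  have himgnd : (P.map (PhiMap n f)).Nodup := List.Nodup.map_on hB hPn
  have hcomps'nd : ((comps (n - k)).map (fun c => (k - 1) :: c)).Nodup :=
    List.Nodup.map_on (fun x _ y _ h => by simpa using h) (nodup_comps _)
  have hpermm : (P.map (PhiMap n f)).Perm ((comps (n - k)).map (fun c => (k - 1) :: c)) := by
    rw [List.perm_ext_iff_of_nodup himgnd hcomps'nd]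
    intro C
    constructor
    · intro hCmem
      obtain ⟨p, hp, rfl⟩ := List.mem_map.mp hCmem
      obtain ⟨h1, h2, h3⟩ := hA p hp
      apply List.mem_map.mpr
      cases hC0 : PhiMap n f p with
      | nil => rw [hC0] at h3; simp at h3
      | cons x tl =>
        rw [hC0] at h1 h2 h3
        simp only [List.head?_cons, Option.some.injEq] at h3
        subst h3
        refine ⟨tl, ?_, rfl⟩
        rw [mem_comps]
        constructor
        · intro j hj
          exact h1 j (by simp [hj])
        · simp only [List.length_cons, List.sum_cons] at h2
          omega
    · intro hCmem
      obtain ⟨c, hc, rfl⟩ := List.mem_map.mp hCmem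
      rw [mem_comps] at hc
      have hcond1 : ∀ j ∈ (k - 1) :: c, 1 ≤ j := by
        intro j hj
        rcases List.mem_cons.mp hj with rfl | hj
        · omega
        · exact hc.1 j hj
      have hcond2 : ((k - 1) :: c).length + ((k - 1) :: c).sum = n := by
        simp only [List.length_cons, List.sum_cons]
        have := hc.2
        omega
      have hcond3 : ((k - 1) :: c).head? = some (k - 1) := by simp
      obtain ⟨p, hp, heq⟩ := hC ((k - 1) :: c) hcond1 hcond2 hcond3
      exact List.mem_map.mpr ⟨p, hp, heq⟩
  calc (L.map fun w => (f w).count (k - 1)).sum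
      = P.length := hsum
    _ = (P.map (PhiMap n f)).length := (List.length_map _).symm
    _ = ((comps (n - k)).map (fun c => (k - 1) :: c)).length := hpermm.length_eq
    _ = (comps (n - k)).length := List.length_map _
    _ = Nat.fib (n - k - 1) := by
        obtain ⟨z, hz⟩ := Nat.exists_eq_succ_of_ne_zero (show n - k ≠ 0 by omega)
        rw [hz, length_comps]
        simp

end CPB

/-- For `n ≥ 2` and `2 ≤ k ≤ n - 1`, the total number of blocks `0 1^{k-1}`
(i.e. blocks of length `k`) in the factorizations into blocks `0 1^j` of all
binary Lyndon words of length dividing `n` containing `0` but not `00`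
equals `F_{n-k-1}`.  Here `L` enumerates these Lyndon words (each exactly
once) and `f w` lists the block parameters `j` of the factorization of `w`. -/
theorem count_primitive_blocks (n k : ℕ) (hn : 2 ≤ n) (hk : 2 ≤ k)
    (hkn : k ≤ n - 1)
    (L : List (List Bool)) (hnd : L.Nodup)
    (hmem : ∀ w, w ∈ L ↔
      IsLyndon w ∧ w.length ∣ n ∧ 2 ≤ w.length ∧ false ∈ w ∧
        ¬ [false, false] <:+: w)
    (f : List Bool → List ℕ)
    (hf : ∀ w ∈ L, (∀ j ∈ f w, 1 ≤ j) ∧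
      w = ((f w).map fun j => false :: List.replicate j true).flatten) :
    (L.map fun w => (f w).count (k - 1)).sum = Nat.fib (n - k - 1) := by
  exact CPB.main n k hn hk hkn L hnd hmem f hf
end

section
/- For n ≥ 2, let ℓ_1 be the concatenation (in any order) of all binary Lyndon words of length d dividing n, d ≥ 2, which contain the letter 0 but not the factor 00. Then the number of 0's in ℓ_1 is F_{n-1}. -/
def rep (k : ℕ) (w : List Bool) : List Bool := (List.replicate k w).flatten

@[simp] lemma rep_zero (w : List Bool) : rep 0 w = [] := rfl

lemma rep_succ (k : ℕ) (w : List Bool) : rep (k+1) w = w ++ rep k w := by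
  simp [rep, List.replicate_succ]

@[simp] lemma rep_one (w : List Bool) : rep 1 w = w := by simp [rep_succ]

@[simp] lemma length_rep (k : ℕ) (w : List Bool) : (rep k w).length = k * w.length := by
  induction k with
  | zero => simp
  | succ k ih => simp [rep_succ, ih, Nat.succ_mul, Nat.add_comm]

lemma comm_append_eq_rep : ∀ (k : ℕ) (a b : List Bool), a ++ b = b ++ a →
    b.length = k * a.length → b = rep k a := by
  intro k
  induction k with
  | zero => intro a b _ h; simpa using List.length_eq_zero_iff.mp (by simpa using h)
  | succ k ih =>
    intro a b hc hl
    rcases Nat.eq_zero_or_pos a.length with ha | ha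
    · have hb : b.length = 0 := by rw [hl, ha]; ring
      have ha' : a = [] := List.length_eq_zero_iff.mp ha
      have hb' : b = [] := List.length_eq_zero_iff.mp hb
      subst ha' hb'; simp [rep]
    · have hab : a.length ≤ b.length := by
        rw [hl]; nlinarith
      have hpre : a = b.take a.length := by
        have := congrArg (List.take a.length) hc
        rwa [List.take_left, List.take_append_of_le_length hab] at this
      have hb : b = a ++ b.drop a.length := by
        conv_lhs => rw [← List.take_append_drop a.length b, ← hpre]
      have hc' : a ++ b.drop a.length = b.drop a.length ++ a := by
        have : a ++ (a ++ b.drop a.length) = (a ++ b.drop a.length) ++ a := by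
          rw [← hb]; exact hc
        rw [List.append_assoc] at this
        exact List.append_cancel_left this
      have hl' : (b.drop a.length).length = k * a.length := by
        simp [hl, Nat.succ_mul]
      rw [hb, ih a _ hc' hl', rep_succ]

lemma rep_shift : ∀ (k : ℕ) (a b : List Bool),
    rep (k+1) (b ++ a) = b ++ rep k (a ++ b) ++ a := by
  intro k
  induction k with
  | zero => intro a b; simp [rep_succ]
  | succ k ih =>
    intro a b
    rw [rep_succ, ih, rep_succ k (a ++ b)]
    simp

lemma rep_rotate {j : ℕ} (k : ℕ) (w : List Bool) (hj : j ≤ w.length) (hk : 0 < k) :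
    (rep k w).rotate j = rep k (w.rotate j) := by
  obtain ⟨k, rfl⟩ := Nat.exists_eq_succ_of_ne_zero hk.ne'
  have hjl : j ≤ (rep (k+1) w).length := by simp; nlinarith
  rw [List.rotate_eq_drop_append_take hjl, List.rotate_eq_drop_append_take hj]
  rw [rep_succ, List.drop_append_of_le_length hj, List.take_append_of_le_length hj]
  have := rep_shift k (w.take j) (w.drop j)
  rw [List.take_append_drop] at this
  rw [← this]

lemma rotate_rep_self (k : ℕ) (w : List Bool) : (rep k w).rotate w.length = rep k w := by
  rcases Nat.eq_zero_or_pos k with rfl | hk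
  · simp
  · rw [rep_rotate k w le_rfl hk, List.rotate_length]

lemma take_rep : ∀ (t k : ℕ) (w : List Bool), t ≤ k →
    (rep k w).take (t * w.length) = rep t w := by
  intro t
  induction t with
  | zero => intro k w _; simp
  | succ t ih =>
    intro k w htk
    obtain ⟨k, rfl⟩ := Nat.exists_eq_add_of_le htk
    rw [rep_succ, show t + 1 + k = (t + k) + 1 by ring, rep_succ, Nat.succ_mul,
      Nat.add_comm (t * w.length), List.take_append]
    rw [List.take_of_length_le (by simp)]
    have h1 : w.length + t * w.length - w.length = t * w.length := by omega
    rw [h1, ih (t+k) w (Nat.le_add_right t k)]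

lemma get_rep : ∀ (k : ℕ) (w : List Bool) (j : ℕ), j < k * w.length →
    (rep k w)[j]? = w[j % w.length]? := by
  intro k
  induction k with
  | zero => intro w j h; simp at h
  | succ k ih =>
    intro w j h
    have hw : 0 < w.length := by by_contra h'; push_neg at h'; interval_cases hwl : w.length <;> simp_all
    rw [rep_succ]
    rcases lt_or_ge j w.length with hj | hj
    · rw [List.getElem?_append_left hj, Nat.mod_eq_of_lt hj]
    · rw [List.getElem?_append_right hj, ih w (j - w.length) (by simp [Nat.succ_mul] at h; omega)]
      congr 1
      exact (Nat.mod_eq_sub_mod hj).symm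

def Primitive (w : List Bool) : Prop := ∀ j, 0 < j → j < w.length → w.rotate j ≠ w

/-- minimal positive period (as rotation) of a nonempty list -/
noncomputable def mp (v : List Bool) (hv : v ≠ []) : ℕ :=
  Nat.find (⟨v.length, by simp [List.length_pos_iff.mpr hv, List.rotate_length]⟩ :
    ∃ j, 0 < j ∧ v.rotate j = v)

lemma mp_pos (v : List Bool) (hv : v ≠ []) : 0 < mp v hv :=
  (Nat.find_spec (⟨v.length, by simp [List.length_pos_iff.mpr hv, List.rotate_length]⟩ :
    ∃ j, 0 < j ∧ v.rotate j = v)).1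

lemma mp_rot (v : List Bool) (hv : v ≠ []) : v.rotate (mp v hv) = v :=
  (Nat.find_spec (⟨v.length, by simp [List.length_pos_iff.mpr hv, List.rotate_length]⟩ :
    ∃ j, 0 < j ∧ v.rotate j = v)).2

lemma mp_min (v : List Bool) (hv : v ≠ []) {j : ℕ} (h1 : 0 < j) (h2 : j < mp v hv) :
    v.rotate j ≠ v := by
  intro hc
  exact Nat.find_min _ h2 ⟨h1, hc⟩

lemma mp_dvd (v : List Bool) (hv : v ≠ []) : ∀ j : ℕ, v.rotate j = v → mp v hv ∣ j := by
  intro j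
  induction j using Nat.strong_induction_on with
  | _ j ih =>
    intro hj
    rcases Nat.eq_zero_or_pos j with rfl | hjp
    · simp
    rcases lt_or_ge j (mp v hv) with h | h
    · exact absurd hj (mp_min v hv hjp h)
    · have hsub : v.rotate (j - mp v hv) = v := by
        have := List.rotate_rotate v (mp v hv) (j - mp v hv)
        rw [mp_rot, show mp v hv + (j - mp v hv) = j by omega, hj] at this
        exact this
      have hlt : j - mp v hv < j := by have := mp_pos v hv; omega
      have := ih _ hlt hsub
      obtain ⟨c, hc⟩ := this
      exact ⟨c + 1, by rw [Nat.mul_add, Nat.mul_one, ← hc]; omega⟩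

lemma period_rep (v : List Bool) (m : ℕ) (hm : 0 < m) (hmn : m ∣ v.length)
    (h : v.rotate m = v) : v = rep (v.length / m) (v.take m) := by
  rcases Nat.eq_zero_or_pos v.length with hn | hn
  · have : v = [] := List.length_eq_zero_iff.mp hn
    subst this; simp [rep]
  have hml : m ≤ v.length := Nat.le_of_dvd hn hmn
  set a := v.take m with ha
  set b := v.drop m with hb
  have hla : a.length = m := by simp [ha, hml]
  have hab : a ++ b = v := List.take_append_drop m v
  have hba : b ++ a = v := by
    rw [← List.rotate_eq_drop_append_take hml, h]
  have hcomm : a ++ b = b ++ a := by rw [hab, hba]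
  set q := v.length / m with hq
  have hqm : q * m = v.length := Nat.div_mul_cancel hmn
  have hq1 : 1 ≤ q := by nlinarith
  have hlb : b.length = (q - 1) * a.length := by
    simp only [hb, List.length_drop, hla, Nat.sub_mul, one_mul, hqm]
  have := comm_append_eq_rep (q-1) a b hcomm hlb
  rw [← hab, this, ← rep_succ]
  congr 1
  omega

lemma prim_cancel {u : List Bool} (hu : Primitive u) {a b : ℕ}
    (ha : a < u.length) (hb : b < u.length) (h : u.rotate a = u.rotate b) : a = b := by
  have key : ∀ a b : ℕ, a ≤ b → a < u.length → b < u.length →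
      u.rotate a = u.rotate b → a = b := by
    intro a b hab ha hb h
    by_contra hne
    have hblt : a < b := lt_of_le_of_ne hab hne
    have h1 : u.rotate (b - a) = u := by
      have e1 := List.rotate_rotate u a (u.length - a)
      rw [show a + (u.length - a) = u.length by omega, List.rotate_length, h] at e1
      rw [List.rotate_rotate, show b + (u.length - a) = (b - a) + u.length by omega,
        ← List.rotate_rotate] at e1
      rwa [show u.length = (u.rotate (b-a)).length by rw [List.length_rotate],
        List.rotate_length] at e1
    exact hu (b - a) (by omega) (by omega) h1
  rcases le_total a b with hab | hab
  · exact key a b hab ha hb h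
  · exact (key b a hab hb ha h.symm).symm

lemma prim_of_lyndon {w : List Bool} (hw : IsLyndon w) : Primitive w := by
  intro j hj hjl hc
  have := hw j hj hjl
  rw [hc] at this
  exact lt_irrefl _ this

lemma lyndon_rot_zero {w w' : List Bool} (hw : IsLyndon w) (hw' : IsLyndon w')
    {j : ℕ} (hj : j < w.length) (h : w' = w.rotate j) : j = 0 := by
  by_contra hne
  have hjp : 0 < j := Nat.pos_of_ne_zero hne
  have h1 : w < w' := h ▸ hw j hjp hj
  have hlen : w'.length = w.length := by rw [h, List.length_rotate]
  have h2 : w'.rotate (w.length - j) = w := by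
    rw [h, List.rotate_rotate, show j + (w.length - j) = w.length by omega,
      List.rotate_length]
  have h3 : w' < w := by
    have := hw' (w.length - j) (by omega) (by rw [hlen]; omega)
    rwa [h2] at this
  exact lt_asymm h1 h3

lemma minper_eq {v u : List Bool} {k : ℕ} (hk : 0 < k) (hu : Primitive u)
    (hune : u ≠ []) (hv : v = rep k u) (hvne : v ≠ []) : mp v hvne = u.length := by
  have hul : 0 < u.length := List.length_pos_iff.mpr hune
  have hvl : v.length = k * u.length := by rw [hv, length_rep]
  have hrot : v.rotate u.length = v := by rw [hv]; exact rotate_rep_self k u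
  have hdvd : mp v hvne ∣ u.length := mp_dvd v hvne u.length hrot
  set m := mp v hvne with hm
  have hmp : 0 < m := mp_pos v hvne
  have hmu : m ≤ u.length := Nat.le_of_dvd hul hdvd
  rcases lt_or_eq_of_le hmu with hlt | heq
  · exfalso
    have hmn : m ∣ v.length := by rw [hvl]; exact Dvd.dvd.mul_left hdvd k
    have hper := period_rep v m hmp hmn (mp_rot v hvne)
    set a := v.take m with haa
    have hla : a.length = m := by
      simp [haa, hvl]
      nlinarith
    have h1 : v.take u.length = u := by
      have := take_rep 1 k u hk
      rwa [one_mul, rep_one, ← hv] at this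
    have hdiv : u.length / m ≤ v.length / m :=
      Nat.div_le_div_right (by rw [hvl]; nlinarith)
    have hu' : u = rep (u.length / m) a := by
      have h2 : v.take (u.length / m * a.length) = rep (u.length / m) a := by
        conv_lhs => rw [hper]
        exact take_rep _ _ _ hdiv
      rw [hla, Nat.div_mul_cancel hdvd, h1] at h2
      exact h2
    have hrotu : u.rotate m = u := by
      conv_lhs => rw [hu']
      rw [rep_rotate _ a (by rw [hla]) (Nat.div_pos hmu hmp)]
      rw [show a.rotate m = a by rw [← hla]; exact List.rotate_length a]
      exact hu'.symm
    exact hu m hmp hlt hrotu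
  · exact heq

def CycOK (u : List Bool) : Prop :=
  ∀ i, u[i]? = some false → u[(i+1) % u.length]? = some true

lemma lt_of_getElem?_some {l : List Bool} {i : ℕ} {b : Bool} (h : l[i]? = some b) :
    i < l.length := by
  by_contra hc
  push_neg at hc
  rw [List.getElem?_eq_none hc] at h
  simp at h

lemma cycok_rotate {u : List Bool} (h : CycOK u) (j : ℕ) : CycOK (u.rotate j) := by
  intro i hi
  have hil : i < u.length := by
    have := lt_of_getElem?_some hi
    simpa using this
  rw [List.getElem?_rotate hil] at hi
  have := h _ hi
  have hl : 0 < u.length := by omega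
  have h2 : (i+1) % (u.rotate j).length < u.length := by
    rw [List.length_rotate]
    exact Nat.mod_lt _ hl
  rw [List.length_rotate, List.getElem?_rotate (by exact Nat.mod_lt _ hl)]
  rw [Nat.mod_add_mod, Nat.add_right_comm]
  rwa [Nat.mod_add_mod] at this

lemma cycok_rep {u : List Bool} (h : CycOK u) {k : ℕ} (hk : 0 < k) : CycOK (rep k u) := by
  intro i hi
  have hil : i < k * u.length := by have := lt_of_getElem?_some hi; simpa using this
  have hul : 0 < u.length := Nat.pos_of_ne_zero (by
    rintro h0; rw [h0, Nat.mul_zero] at hil; omega)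
  rw [get_rep k u i hil] at hi
  have := h _ hi
  rw [Nat.mod_add_mod] at this
  have hkl : 0 < k * u.length := by positivity
  rw [length_rep, get_rep k u _ (Nat.mod_lt _ hkl), Nat.mod_mod_of_dvd _ ⟨k, by ring⟩]
  exact this

lemma cycok_of_rep {u : List Bool} {k : ℕ} (hk : 0 < k) (hu : u ≠ [])
    (h : CycOK (rep k u)) : CycOK u := by
  intro i hi
  have hil : i < u.length := lt_of_getElem?_some hi
  have hul : 0 < u.length := by omega
  have hkl : 0 < k * u.length := by positivity
  have h1 : (rep k u)[i]? = some false := by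
    rw [get_rep k u i (lt_of_lt_of_le hil (Nat.le_mul_of_pos_left _ hk)), Nat.mod_eq_of_lt hil]
    exact hi
  have := h _ h1
  rw [length_rep, get_rep k u _ (Nat.mod_lt _ hkl), Nat.mod_mod_of_dvd _ ⟨k, by ring⟩] at this
  exact this

lemma pair_infix_iff {x y : Bool} {l : List Bool} :
    [x, y] <:+: l ↔ ∃ i, l[i]? = some x ∧ l[i+1]? = some y := by
  constructor
  · rintro ⟨s, t, rfl⟩
    refine ⟨s.length, ?_, ?_⟩
    · rw [List.append_assoc, List.getElem?_append_right le_rfl]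
      simp
    · rw [List.append_assoc,
        List.getElem?_append_right (by omega : s.length ≤ s.length + 1)]
      simp [show s.length + 1 - s.length = 1 by omega]
  · rintro ⟨i, hx, hy⟩
    induction l generalizing i with
    | nil => simp at hx
    | cons a l ih =>
      rcases Nat.eq_zero_or_pos i with rfl | hi
      · simp at hx
        subst hx
        cases l with
        | nil => simp at hy
        | cons b l' =>
          simp at hy
          subst hy
          exact ⟨[], l', by simp⟩
      · obtain ⟨i, rfl⟩ := Nat.exists_eq_succ_of_ne_zero hi.ne'
        simp only [List.getElem?_cons_succ] at hx hy
        exact List.infix_cons (ih i hx hy)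

lemma no00_of_cycok {u : List Bool} (h : CycOK u) : ¬ [false, false] <:+: u := by
  rw [pair_infix_iff]
  rintro ⟨i, h1, h2⟩
  have hi1 : i + 1 < u.length := lt_of_getElem?_some h2
  have := h i h1
  rw [Nat.mod_eq_of_lt hi1] at this
  rw [this] at h2
  simp at h2

lemma getLast?_eq_getElem?' (l : List Bool) : l.getLast? = l[l.length - 1]? := by
  cases l with
  | nil => simp
  | cons a t =>
    rw [List.getLast?_eq_getLast (l := a :: t) (by simp), List.getLast_eq_getElem]
    rw [List.getElem?_eq_getElem (by simp)]

lemma cycok_of_no00 {v : List Bool} (h1 : ¬ [false, false] <:+: v)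
    (h2 : v.getLast? = some true) : CycOK v := by
  intro i hi
  have hil : i < v.length := lt_of_getElem?_some hi
  rcases Nat.lt_or_ge (i+1) v.length with hlt | hge
  · rw [Nat.mod_eq_of_lt hlt]
    have h3 : v[i+1]? ≠ some false := by
      intro hc
      exact h1 (pair_infix_iff.mpr ⟨i, hi, hc⟩)
    rw [List.getElem?_eq_getElem hlt] at h3 ⊢
    rcases Bool.eq_false_or_eq_true v[i+1] with hb | hb
    · rw [hb]
    · exact absurd (by rw [hb]) h3
  · -- i = v.length - 1, so v.getLast = false, contradiction
    have : i = v.length - 1 := by omega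
    rw [getLast?_eq_getElem?', ← this, hi] at h2
    simp at h2

lemma last_true_of_cycok {v : List Bool} (h : CycOK v) (hh : v[0]? = some false)
    (hl : 2 ≤ v.length) : v.getLast? = some true := by
  rw [getLast?_eq_getElem?']
  have hlast : v.length - 1 < v.length := by omega
  rw [List.getElem?_eq_getElem hlast]
  rcases Bool.eq_false_or_eq_true v[v.length - 1] with hb | hb
  · rw [hb]
  · exfalso
    have h1 : v[v.length - 1]? = some false := by
      rw [List.getElem?_eq_getElem hlast, hb]
    have := h _ h1
    rw [show v.length - 1 + 1 = v.length by omega, Nat.mod_self, hh] at this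
    simp at this

example : ([false] : List Bool) < [true] := List.Lex.rel (by decide)

lemma lex_lt_of_head {x y : List Bool} (hx : x[0]? = some false)
    (hy : y[0]? = some true) : x < y := by
  cases x with
  | nil => simp at hx
  | cons a x' =>
    cases y with
    | nil => simp at hy
    | cons b y' =>
      simp at hx hy
      subst hx; subst hy
      exact List.Lex.rel (by decide)

lemma lex_lt_two {x y : List Bool} {c : Bool} (hx0 : x[0]? = some c)
    (hy0 : y[0]? = some c) (hx1 : x[1]? = some false) (hy1 : y[1]? = some true) :
    x < y := by
  cases x with
  | nil => simp at hx0
  | cons a x' =>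
    cases y with
    | nil => simp at hy0
    | cons b y' =>
      simp at hx0 hy0
      subst hx0; subst hy0
      cases x' with
      | nil => simp at hx1
      | cons a1 x'' =>
        cases y' with
        | nil => simp at hy1
        | cons b1 y'' =>
          simp at hx1 hy1
          subst hx1; subst hy1
          exact List.Lex.cons (List.Lex.rel (by decide))

lemma lyndon_head {w : List Bool} (hw : IsLyndon w) (hf : false ∈ w) :
    w[0]? = some false := by
  obtain ⟨j, hj, hjval⟩ := List.mem_iff_getElem.mp hf
  have hw0 : 0 < w.length := by omega
  rcases Bool.eq_false_or_eq_true w[0] with hb | hb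
  · exfalso
    have hj0 : j ≠ 0 := by rintro rfl; rw [hjval] at hb; simp at hb
    have hr0 : (w.rotate j)[0]? = some false := by
      rw [List.getElem?_rotate hw0, Nat.zero_add, Nat.mod_eq_of_lt hj,
        List.getElem?_eq_getElem hj, hjval]
    have h1 : w < w.rotate j := hw j (Nat.pos_of_ne_zero hj0) hj
    have h2 : w.rotate j < w :=
      lex_lt_of_head hr0 (by rw [List.getElem?_eq_getElem hw0, hb])
    exact lt_asymm h1 h2
  · rw [List.getElem?_eq_getElem hw0, hb]

lemma lyndon_last {w : List Bool} (hw : IsLyndon w) (h0 : w[0]? = some false)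
    (h00 : ¬ [false, false] <:+: w) (hl : 2 ≤ w.length) :
    w.getLast? = some true := by
  have hm1 : w.length - 1 < w.length := by omega
  rw [getLast?_eq_getElem?', List.getElem?_eq_getElem hm1]
  rcases Bool.eq_false_or_eq_true w[w.length - 1] with hb | hb
  · rw [hb]
  · exfalso
    have h1lt : 1 < w.length := by omega
    have hw1 : w[1]? = some true := by
      rw [List.getElem?_eq_getElem h1lt]
      rcases Bool.eq_false_or_eq_true w[1] with hc | hc
      · rw [hc]
      · exact absurd (pair_infix_iff.mpr ⟨0, h0, by rw [List.getElem?_eq_getElem h1lt, hc]⟩) h00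
    have hr0 : (w.rotate (w.length - 1))[0]? = some false := by
      rw [List.getElem?_rotate (by omega : (0:ℕ) < w.length), Nat.zero_add,
        Nat.mod_eq_of_lt hm1, List.getElem?_eq_getElem hm1, hb]
    have hr1 : (w.rotate (w.length - 1))[1]? = some false := by
      rw [List.getElem?_rotate h1lt, show (1 + (w.length - 1)) % w.length = 0 by
        rw [show 1 + (w.length - 1) = w.length by omega, Nat.mod_self]]
      exact h0
    have h1 : w < w.rotate (w.length - 1) := hw _ (by omega) hm1
    have h2 : w.rotate (w.length - 1) < w := lex_lt_two hr0 h0 hr1 hw1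
    exact lt_asymm h1 h2

def TSet (n : ℕ) (v : List Bool) : Prop :=
  v.length = n ∧ v[0]? = some false ∧ CycOK v

lemma prim_rotate {w : List Bool} (hw : Primitive w) {i : ℕ} (hi : i < w.length) :
    Primitive (w.rotate i) := by
  intro j hj hjl hc
  rw [List.length_rotate] at hjl
  rw [List.rotate_rotate] at hc
  have h1 : w.rotate ((i + j) % w.length) = w.rotate i := by
    rw [List.rotate_mod]; exact hc
  have h2 := prim_cancel hw (Nat.mod_lt _ (by omega)) hi h1
  rcases lt_or_ge (i + j) w.length with h | h
  · rw [Nat.mod_eq_of_lt h] at h2; omega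
  · rw [Nat.mod_eq_sub_mod h, Nat.mod_eq_of_lt (by omega)] at h2; omega

lemma fwd {n : ℕ} (hn : 2 ≤ n) {w : List Bool} (hw : IsLyndon w)
    (hdvd : w.length ∣ n) (hlen2 : 2 ≤ w.length) (hf : false ∈ w)
    (h00 : ¬ [false, false] <:+: w) {i : ℕ} (hi : w[i]? = some false) :
    TSet n (rep (n / w.length) (w.rotate i)) := by
  have him : i < w.length := lt_of_getElem?_some hi
  have hm : 0 < w.length := by omega
  have hk : 0 < n / w.length := Nat.div_pos (Nat.le_of_dvd (by omega) hdvd) hm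
  have h0 := lyndon_head hw hf
  have hlast := lyndon_last hw h0 h00 hlen2
  have hcyc : CycOK w := cycok_of_no00 h00 hlast
  have hcycr : CycOK (w.rotate i) := cycok_rotate hcyc i
  refine ⟨?_, ?_, cycok_rep hcycr hk⟩
  · rw [length_rep, List.length_rotate, Nat.div_mul_cancel hdvd]
  · rw [get_rep _ _ 0 (by rw [List.length_rotate]; positivity)]
    rw [List.length_rotate, Nat.zero_mod, List.getElem?_rotate hm, Nat.zero_add,
      Nat.mod_eq_of_lt him]
    exact hi

lemma inj_aux {n : ℕ} (hn : 0 < n) {w w' : List Bool} {i i' : ℕ}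
    (hw : IsLyndon w) (hw' : IsLyndon w')
    (hd : w.length ∣ n) (hd' : w'.length ∣ n)
    (h2 : 2 ≤ w.length) (h2' : 2 ≤ w'.length)
    (hi : i < w.length) (hi' : i' < w'.length)
    (heq : rep (n / w.length) (w.rotate i) = rep (n / w'.length) (w'.rotate i')) :
    w = w' ∧ i = i' := by
  set m := w.length with hmdef
  set m' := w'.length with hmdef'
  have hm : 0 < m := by omega
  have hm' : 0 < m' := by omega
  have hk : 0 < n / m := Nat.div_pos (Nat.le_of_dvd hn hd) hm
  have hk' : 0 < n / m' := Nat.div_pos (Nat.le_of_dvd hn hd') hm'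
  set u := w.rotate i with hudef
  set u' := w'.rotate i' with hudef'
  have hul : u.length = m := List.length_rotate w i
  have hul' : u'.length = m' := List.length_rotate w' i'
  have hune : u ≠ [] := by rw [← List.length_pos_iff, hul]; omega
  have hune' : u' ≠ [] := by rw [← List.length_pos_iff, hul']; omega
  set v := rep (n / m) u with hvdef
  have hvne : v ≠ [] := by
    rw [← List.length_pos_iff, hvdef, length_rep, hul]
    have := Nat.div_mul_cancel hd
    omega
  have hpu : Primitive u := prim_rotate (prim_of_lyndon hw) hi
  have hpu' : Primitive u' := prim_rotate (prim_of_lyndon hw') hi'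
  have e1 : mp v hvne = m := by rw [minper_eq hk hpu hune rfl hvne, hul]
  have e2 : mp v hvne = m' := by
    rw [minper_eq hk' hpu' hune' heq hvne, hul']
  have hmm : m = m' := by rw [← e1, e2]
  have huu : u = u' := by
    have t1 : v.take u.length = u := by
      have := take_rep 1 (n / m) u hk
      rwa [one_mul, rep_one] at this
    have t2 : v.take u'.length = u' := by
      have := take_rep 1 (n / m') u' hk'
      rwa [one_mul, rep_one, ← heq] at this
    rw [← t1, ← t2, hul, hul', hmm]
  have hwrot : w = u.rotate (m - i) := by
    rw [hudef, List.rotate_rotate, show i + (m - i) = m by omega, hmdef,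
      List.rotate_length]
  have hwrot' : w' = u.rotate (m' - i') := by
    rw [huu, hudef', List.rotate_rotate, show i' + (m' - i') = m' by omega, hmdef',
      List.rotate_length]
  have hww : w' = w.rotate ((i + (m - i')) % m) := by
    rw [List.rotate_mod, hwrot', hudef, List.rotate_rotate, hmm]
  have hj0 : (i + (m - i')) % m = 0 :=
    lyndon_rot_zero hw hw' (Nat.mod_lt _ hm) hww
  have hww2 : w' = w := by rw [hww, hj0, List.rotate_zero]
  refine ⟨hww2.symm, ?_⟩
  have : u = w.rotate i' := by rw [huu, hudef', hww2]
  exact prim_cancel (prim_of_lyndon hw) hi (by rw [← hmdef, hmm]; exact hi')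
    (by rw [← hudef, this])

lemma surj_aux {n : ℕ} (hn : 2 ≤ n) {v : List Bool} (hv : TSet n v) :
    ∃ w i, IsLyndon w ∧ w.length ∣ n ∧ 2 ≤ w.length ∧ false ∈ w ∧
      ¬ [false, false] <:+: w ∧ i < w.length ∧ w[i]? = some false ∧
      rep (n / w.length) (w.rotate i) = v := by
  obtain ⟨hvl, hv0, hvc⟩ := hv
  have hvne : v ≠ [] := by rw [← List.length_pos_iff, hvl]; omega
  set m := mp v hvne with hmdef
  have hmpos : 0 < m := mp_pos v hvne
  have hmdvd : m ∣ n := by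
    rw [← hvl]
    exact mp_dvd v hvne v.length (List.rotate_length v)
  have hmn : m ≤ n := Nat.le_of_dvd (by omega) hmdvd
  set u := v.take m with hudef
  have hul : u.length = m := by
    rw [hudef, List.length_take, hvl]; omega
  have hune : u ≠ [] := by rw [← List.length_pos_iff, hul]; omega
  have hk : 0 < n / m := Nat.div_pos hmn hmpos
  have hper : v = rep (n / m) u := by
    have := period_rep v m hmpos (by rw [hvl]; exact hmdvd) (mp_rot v hvne)
    rwa [hvl] at this
  have hprim : Primitive u := by
    intro j hj hjl hc
    rw [hul] at hjl
    have : v.rotate j = v := by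
      conv_lhs => rw [hper]
      rw [rep_rotate _ _ (by rw [hul]; omega) hk, hc, ← hper]
    exact mp_min v hvne hj hjl this
  have hu0 : u[0]? = some false := by
    rw [hudef, List.getElem?_take_of_lt hmpos]
    exact hv0
  have hucyc : CycOK u := cycok_of_rep hk hune (by rw [← hper]; exact hvc)
  -- m ≥ 2
  have hm2 : 2 ≤ m := by
    by_contra hc
    have hm1 : m = 1 := by omega
    have := hucyc 0 hu0
    rw [hul, hm1] at this
    simp at this
    rw [hu0] at this
    simp at this
  -- choose the minimal rotation
  set R := (List.range m).map (u.rotate ·) with hRdef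
  have hRne : R ≠ [] := by
    simp [hRdef, List.range_eq_nil]
    omega
  have hFne : R.toFinset.Nonempty := by
    rw [List.toFinset_nonempty_iff]
    exact hRne
  set w := R.toFinset.min' hFne with hwdef
  have hwR : w ∈ R := by
    have := R.toFinset.min'_mem hFne
    rwa [List.mem_toFinset] at this
  have hwle : ∀ x ∈ R, w ≤ x := fun x hx =>
    R.toFinset.min'_le x (List.mem_toFinset.mpr hx)
  obtain ⟨t, ht, hwt⟩ := List.mem_map.mp hwR
  rw [List.mem_range] at ht
  have hwl : w.length = m := by rw [← hwt, List.length_rotate, hul]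
  have hLyn : IsLyndon w := by
    intro s hs hsl
    rw [hwl] at hsl
    have hrot : w.rotate s = u.rotate ((t + s) % m) := by
      rw [← hwt, List.rotate_rotate, ← hul, List.rotate_mod]
    have hmem : w.rotate s ∈ R := by
      rw [hrot, hRdef]
      exact List.mem_map.mpr ⟨(t + s) % m, List.mem_range.mpr (Nat.mod_lt _ hmpos), rfl⟩
    refine lt_of_le_of_ne (hwle _ hmem) ?_
    intro hc
    rw [hrot, ← hwt] at hc
    have := prim_cancel hprim (by rw [hul]; exact ht)
      (by rw [hul]; exact Nat.mod_lt _ hmpos) hc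
    rcases lt_or_ge (t + s) m with h | h
    · rw [Nat.mod_eq_of_lt h] at this; omega
    · rw [Nat.mod_eq_sub_mod h, Nat.mod_eq_of_lt (by omega)] at this; omega
  set i := if t = 0 then 0 else m - t with hidef
  have hil : i < m := by
    rw [hidef]; split <;> omega
  have hwi : w.rotate i = u := by
    rw [← hwt, List.rotate_rotate]
    rcases eq_or_ne t 0 with rfl | htne
    · simp [hidef]
    · rw [hidef, if_neg htne, show t + (m - t) = m by omega, ← hul, List.rotate_length]
  have hwif : w[i]? = some false := by
    have : (w.rotate i)[0]? = some false := by rw [hwi]; exact hu0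
    rw [List.getElem?_rotate (by rw [hwl]; omega), Nat.zero_add, hwl,
      Nat.mod_eq_of_lt hil] at this
    exact this
  have hwcyc : CycOK w := by
    have := cycok_rotate hucyc t
    rwa [hwt] at this
  refine ⟨w, i, hLyn, by rw [hwl]; exact hmdvd, by rw [hwl]; exact hm2, ?_,
    no00_of_cycok hwcyc, by rw [hwl]; exact hil, hwif, ?_⟩
  · exact List.mem_of_getElem? hwif
  · rw [hwl, hwi, ← hper]

def enum : ℕ → List (List Bool)
  | 0 => [[]]
  | k+1 => (enum k).map (false :: ·) ++ (enum k).map (true :: ·)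

lemma mem_enum {w : List Bool} : ∀ {k : ℕ}, w ∈ enum k ↔ w.length = k := by
  induction w with
  | nil =>
    intro k
    cases k with
    | zero => simp [enum]
    | succ k => simp [enum]
  | cons a t ih =>
    intro k
    cases k with
    | zero => simp [enum]
    | succ k =>
      simp only [enum, List.mem_append, List.mem_map, List.length_cons]
      constructor
      · rintro (⟨x, hx, hax⟩ | ⟨x, hx, hax⟩) <;>
          (cases hax; simp [ih.mp hx])
      · intro h
        cases a
        · exact Or.inl ⟨t, ih.mpr (by omega), rfl⟩
        · exact Or.inr ⟨t, ih.mpr (by omega), rfl⟩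

lemma nodup_enum : ∀ k, (enum k).Nodup := by
  intro k
  induction k with
  | zero => simp [enum]
  | succ k ih =>
    rw [enum]
    refine List.Nodup.append ?_ ?_ ?_
    · exact ih.map (fun x y h => by simpa using h)
    · exact ih.map (fun x y h => by simpa using h)
    · intro x hx hy
      simp only [List.mem_map] at hx hy
      obtain ⟨a, _, rfl⟩ := hx
      obtain ⟨b, _, hb⟩ := hy
      simp at hb

def cnt (p : List Bool → Bool) (k : ℕ) : ℕ := ((enum k).filter p).length

lemma cnt_succ (p : List Bool → Bool) (k : ℕ) :
    cnt p (k+1) = cnt (fun w => p (false :: w)) k + cnt (fun w => p (true :: w)) k := by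
  unfold cnt
  rw [enum, List.filter_append, List.length_append, List.filter_map, List.filter_map,
    List.length_map, List.length_map]
  rfl

lemma cnt_congr {p q : List Bool → Bool} {k : ℕ}
    (h : ∀ w : List Bool, w.length = k → p w = q w) : cnt p k = cnt q k := by
  unfold cnt
  rw [List.filter_congr (fun w hw => h w (mem_enum.mp hw))]

lemma cnt_false (k : ℕ) : cnt (fun _ => false) k = 0 := by
  simp [cnt]

def pN (w : List Bool) : Bool := !decide ([false, false] <:+: w)
def pE (w : List Bool) : Bool := pN w && (w.isEmpty || w.getLast? == some true)
def pD (w : List Bool) : Bool := pN w && !(w[0]? == some false) && (w.getLast? == some true)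
def pT (v : List Bool) : Bool := (v[0]? == some false) && pN v && (v.getLast? == some true)

lemma no00_cons {c : Bool} {w : List Bool} :
    [false, false] <:+: (c :: w) ↔ (c = false ∧ w[0]? = some false) ∨ [false, false] <:+: w := by
  rw [pair_infix_iff, pair_infix_iff]
  constructor
  · rintro ⟨i, h0, h1⟩
    cases i with
    | zero =>
      simp only [List.getElem?_cons_zero, Option.some_inj] at h0
      exact Or.inl ⟨h0, by simpa using h1⟩
    | succ i =>
      exact Or.inr ⟨i, by simpa using h0, by simpa using h1⟩
  · rintro (⟨rfl, h⟩ | ⟨i, h0, h1⟩)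
    · exact ⟨0, by simp, by simpa using h⟩
    · exact ⟨i+1, by simpa using h0, by simpa using h1⟩

lemma pN_cons_true (w : List Bool) : pN (true :: w) = pN w := by
  simp only [pN, no00_cons]
  simp

lemma pN_cons_false (w : List Bool) : pN (false :: w) = (pN w && !(w[0]? == some false)) := by
  simp only [pN, no00_cons]
  rcases h : w[0]? with _ | b
  · simp [h]
  · cases b <;> simp [h] <;> tauto

lemma getLast?_cons_ne {c : Bool} {w : List Bool} (h : w ≠ []) :
    (c :: w).getLast? = w.getLast? := by
  cases w with
  | nil => exact absurd rfl h
  | cons a t => rw [List.getLast?_cons_cons]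

lemma D_succ (k : ℕ) : cnt pD (k+1) = cnt pE k := by
  rw [cnt_succ]
  have h1 : cnt (fun w => pD (false :: w)) k = 0 := by
    rw [cnt_congr (q := fun _ => false) (fun w _ => by simp [pD]), cnt_false]
  have h2 : cnt (fun w => pD (true :: w)) k = cnt pE k := by
    refine cnt_congr (fun w _ => ?_)
    cases w with
    | nil => simp [pD, pE, pN]; decide
    | cons a t =>
      rw [pD, pE, pN_cons_true, getLast?_cons_ne (by simp)]
      simp
  omega

lemma E_succ (k : ℕ) : cnt pE (k+1) = cnt pD k + cnt pE k := by
  rw [cnt_succ]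
  have h1 : cnt (fun w => pE (false :: w)) k = cnt pD k := by
    refine cnt_congr (fun w _ => ?_)
    cases w with
    | nil => simp [pD, pE, pN]
    | cons a t =>
      rw [pE, pD, pN_cons_false, getLast?_cons_ne (by simp)]
      simp only [List.isEmpty_cons, Bool.false_or]
  have h2 : cnt (fun w => pE (true :: w)) k = cnt pE k := by
    refine cnt_congr (fun w _ => ?_)
    cases w with
    | nil => simp [pE, pN]; decide
    | cons a t =>
      rw [pE, pE, pN_cons_true, getLast?_cons_ne (by simp)]
      simp
  omega

lemma E_fib : ∀ k, cnt pE k = Nat.fib (k+1) := by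
  have hE0 : cnt pE 0 = 1 := by decide
  have hD0 : cnt pD 0 = 0 := by decide
  intro k
  induction k using Nat.strong_induction_on with
  | _ k ih =>
    match k with
    | 0 => exact hE0
    | 1 => rw [E_succ, hD0, hE0]; decide
    | (k+2) =>
      have h3 : Nat.fib (k + 2 + 1) = Nat.fib (k+1) + Nat.fib (k+1+1) := by
        rw [show k + 2 + 1 = (k+1) + 2 by ring]
        exact Nat.fib_add_two
      rw [E_succ, D_succ, ih (k+1) (by omega), ih k (by omega), h3]

lemma T_fib {n : ℕ} (hn : 2 ≤ n) : cnt pT n = Nat.fib (n - 1) := by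
  obtain ⟨k, rfl⟩ : ∃ k, n = k + 2 := ⟨n - 2, by omega⟩
  rw [show k + 2 = (k+1) + 1 by ring, cnt_succ]
  have h1 : cnt (fun w => pT (false :: w)) (k+1) = cnt pD (k+1) := by
    refine cnt_congr (fun w hw => ?_)
    cases w with
    | nil => simp at hw
    | cons a t =>
      rw [pT, pD, pN_cons_false, getLast?_cons_ne (by simp)]
      simp only [List.getElem?_cons_zero, beq_self_eq_true, Bool.true_and]
  have h2 : cnt (fun w => pT (true :: w)) (k+1) = 0 := by
    rw [cnt_congr (q := fun _ => false) (fun w _ => by simp [pT]), cnt_false]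
  rw [h1, h2, D_succ, E_fib]
  simp [show k + 2 - 1 = k + 1 by omega]

def zposList (w : List Bool) : List ℕ :=
  (List.range w.length).filter (fun i => w[i]? == some false)

lemma zpos_length (w : List Bool) : (zposList w).length = w.count false := by
  induction w with
  | nil => simp [zposList]
  | cons a t ih =>
    unfold zposList at ih ⊢
    rw [List.length_cons, List.range_succ_eq_map, List.filter_cons, List.filter_map]
    have h1 : ((List.range t.length).filter
        ((fun i => (a :: t)[i]? == some false) ∘ (· + 1))) =
        (List.range t.length).filter (fun i => t[i]? == some false) := by
      apply List.filter_congr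
      intro i _
      simp
    rw [List.count_cons]
    cases a <;> simp [h1, ih] <;> omega

lemma zpos_mem {w : List Bool} {i : ℕ} : i ∈ zposList w ↔ w[i]? = some false := by
  simp only [zposList, List.mem_filter, List.mem_range, beq_iff_eq, and_iff_right_iff_imp]
  exact fun h => lt_of_getElem?_some h

lemma zpos_nodup (w : List Bool) : (zposList w).Nodup :=
  List.nodup_range.filter _

def pairs (M : List (List Bool)) : List (List Bool × ℕ) :=
  M.flatMap (fun w => (zposList w).map (fun i => (w, i)))

lemma pairs_length : ∀ M : List (List Bool), (pairs M).length = M.flatten.count false := by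
  intro M
  induction M with
  | nil => simp [pairs]
  | cons w M ih =>
    simp only [pairs, List.flatMap_cons, List.length_append, List.length_map,
      List.flatten_cons, List.count_append]
    rw [zpos_length]
    unfold pairs at ih
    omega

lemma pairs_mem {M : List (List Bool)} {w : List Bool} {i : ℕ} :
    (w, i) ∈ pairs M ↔ w ∈ M ∧ w[i]? = some false := by
  simp only [pairs, List.mem_flatMap, List.mem_map]
  constructor
  · rintro ⟨a, ha, j, hj, hji⟩
    have h1 : a = w := congrArg Prod.fst hji
    have h2 : j = i := congrArg Prod.snd hji
    subst h1; subst h2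
    exact ⟨ha, zpos_mem.mp hj⟩
  · rintro ⟨hw, hi⟩
    exact ⟨w, hw, i, zpos_mem.mpr hi, rfl⟩

lemma pairs_nodup {M : List (List Bool)} (hM : M.Nodup) : (pairs M).Nodup := by
  induction M with
  | nil => simp [pairs]
  | cons w M ih =>
    rw [List.nodup_cons] at hM
    unfold pairs
    rw [List.flatMap_cons]
    refine List.Nodup.append ?_ (ih hM.2) ?_
    · exact (zpos_nodup w).map (fun x y h => by simpa using h)
    · intro x hx hy
      simp only [List.mem_map] at hx
      obtain ⟨j, _, rfl⟩ := hx
      obtain ⟨a, ha, hmem2⟩ := List.mem_flatMap.mp hy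
      obtain ⟨j', _, hji⟩ := List.mem_map.mp hmem2
      have : a = w := congrArg Prod.fst hji
      subst this
      exact hM.1 ha

lemma mem_TL_iff {n : ℕ} (hn : 2 ≤ n) {v : List Bool} :
    v ∈ (enum n).filter pT ↔ TSet n v := by
  rw [List.mem_filter, mem_enum]
  simp only [pT, pN, Bool.and_eq_true, beq_iff_eq, Bool.not_eq_true',
    decide_eq_false_iff_not]
  constructor
  · rintro ⟨hlen, ⟨⟨h0, h00⟩, hlast⟩⟩
    exact ⟨hlen, h0, cycok_of_no00 h00 hlast⟩
  · rintro ⟨hlen, h0, hcyc⟩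
    exact ⟨hlen, ⟨⟨h0, no00_of_cycok hcyc⟩, last_true_of_cycok hcyc h0 (by omega)⟩⟩

/-- For `n ≥ 2`, the number of 0's in the concatenation `ℓ₁` (in any order)
of all binary Lyndon words of length `d ∣ n`, `d ≥ 2`, containing `0` but
not `00`, is `F_{n-1}`. -/
theorem count_zeros_ell_one (n : ℕ) (hn : 2 ≤ n)
    (L : List (List Bool)) (hnd : L.Nodup)
    (hmem : ∀ w, w ∈ L ↔
      IsLyndon w ∧ w.length ∣ n ∧ 2 ≤ w.length ∧ false ∈ w ∧
        ¬ [false, false] <:+: w) :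
    L.flatten.count false = Nat.fib (n - 1) := by
  have hn0 : 0 < n := by omega
  set TL := (enum n).filter pT with hTL
  have hTLnd : TL.Nodup := (nodup_enum n).filter _
  set F : List Bool × ℕ → List Bool := fun p => rep (n / p.1.length) (p.1.rotate p.2)
    with hF
  have hinj : ∀ p ∈ pairs L, ∀ q ∈ pairs L, F p = F q → p = q := by
    rintro ⟨w, i⟩ hp ⟨w', i'⟩ hq hFeq
    obtain ⟨hwL, hwi⟩ := pairs_mem.mp hp
    obtain ⟨hwL', hwi'⟩ := pairs_mem.mp hq
    obtain ⟨hw1, hw2, hw3, hw4, hw5⟩ := (hmem w).mp hwL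
    obtain ⟨hw1', hw2', hw3', hw4', hw5'⟩ := (hmem w').mp hwL'
    obtain ⟨he1, he2⟩ := inj_aux hn0 hw1 hw1' hw2 hw2' hw3 hw3'
      (lt_of_getElem?_some hwi) (lt_of_getElem?_some hwi') hFeq
    rw [he1, he2]
  have hmapnd : ((pairs L).map F).Nodup := (pairs_nodup hnd).map_on hinj
  have hmemiff : ∀ v, v ∈ (pairs L).map F ↔ v ∈ TL := by
    intro v
    rw [List.mem_map, hTL, mem_TL_iff hn]
    constructor
    · rintro ⟨⟨w, i⟩, hp, rfl⟩
      obtain ⟨hwL, hwi⟩ := pairs_mem.mp hp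
      obtain ⟨h1, h2, h3, h4, h5⟩ := (hmem w).mp hwL
      exact fwd hn h1 h2 h3 h4 h5 hwi
    · intro hv
      obtain ⟨w, i, h1, h2, h3, h4, h5, h6, h7, h8⟩ := surj_aux hn hv
      exact ⟨(w, i), pairs_mem.mpr ⟨(hmem w).mpr ⟨h1, h2, h3, h4, h5⟩, h7⟩, h8⟩
  have hperm : List.Perm ((pairs L).map F) TL :=
    (List.perm_ext_iff_of_nodup hmapnd hTLnd).mpr hmemiff
  have hlen := hperm.length_eq
  rw [List.length_map, pairs_length] at hlen
  rw [hlen]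
  exact T_fib hn
end

section
/- For n ≥ 2, let ℓ_1 be the concatenation of all binary Lyndon words of length d dividing n, d ≥ 2, which contain 0 but not 00. Then the skew of ℓ_1 (number of 0's minus number of 1's) equals -F_n + 1. -/
private def wpow (w : List Bool) (k : ℕ) : List Bool := (List.replicate k w).flatten

private lemma wpow_succ (w : List Bool) (k : ℕ) : wpow w (k+1) = w ++ wpow w k := by
  simp [wpow, List.replicate_succ]

private lemma length_wpow (w : List Bool) (k : ℕ) : (wpow w k).length = k * w.length := by
  induction k with
  | zero => simp [wpow]
  | succ k ih => rw [wpow_succ]; simp [ih]; ring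

private lemma count_wpow (a : Bool) (w : List Bool) (k : ℕ) :
    (wpow w k).count a = k * w.count a := by
  induction k with
  | zero => simp [wpow]
  | succ k ih => rw [wpow_succ]; simp [List.count_append, ih]; ring

private lemma getElem_wpow (w : List Bool) (hw : w ≠ []) (k j : ℕ)
    (h : j < (wpow w k).length) :
    (wpow w k)[j] = w[j % w.length]'(Nat.mod_lt _ (List.length_pos_iff.2 hw)) := by
  induction k generalizing j with
  | zero => simp [wpow] at h
  | succ k ih =>
    simp only [wpow_succ] at h ⊢
    rcases lt_or_ge j w.length with hj | hj
    · rw [List.getElem_append_left hj]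
      congr 1
      exact (Nat.mod_eq_of_lt hj).symm
    · rw [List.getElem_append_right hj, ih]
      congr 1
      exact (Nat.mod_eq_sub_mod hj).symm

private lemma list_lt_iff (x y : List Bool) : x < y ↔ List.Lex (· < ·) x y := Iff.rfl

private lemma lex_append {u v : List Bool} (x y : List Bool) (hl : u.length = v.length)
    (h : u < v) : u ++ x < v ++ y := by
  rw [list_lt_iff] at h ⊢
  revert hl
  induction h with
  | nil => intro hl; simp at hl
  | rel hab => intro _; exact List.Lex.rel hab
  | cons h ih => intro hl; exact List.Lex.cons (ih (by simpa using hl))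

private lemma ext_getD {x y : List Bool} (hl : x.length = y.length)
    (h : ∀ i, i < x.length → x.getD i true = y.getD i true) : x = y := by
  apply List.ext_getElem hl
  intro n h1 h2
  rw [← List.getD_eq_getElem x true h1, ← List.getD_eq_getElem y true h2]
  exact h n h1

private lemma getD_rotate (s : List Bool) (m i : ℕ) (hi : i < s.length) :
    (s.rotate m).getD i true = s.getD ((i + m) % s.length) true := by
  have hp : 0 < s.length := by omega
  rw [List.getD_eq_getElem _ _ (by simpa using hi),
      List.getD_eq_getElem _ _ (Nat.mod_lt _ hp), List.getElem_rotate]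

private lemma getD_wpow (w : List Bool) (hw : w ≠ []) (k j : ℕ)
    (hj : j < k * w.length) :
    (wpow w k).getD j true = w.getD (j % w.length) true := by
  have hp : 0 < w.length := List.length_pos_iff.2 hw
  rw [List.getD_eq_getElem _ _ (by rw [length_wpow]; exact hj),
      List.getD_eq_getElem _ _ (Nat.mod_lt _ hp), getElem_wpow w hw]

private lemma getD_take (s : List Bool) (d i : ℕ) (hi : i < d) (hd : d ≤ s.length) :
    (s.take d).getD i true = s.getD i true := by
  rw [List.getD_eq_getElem _ _ (by simp; omega), List.getD_eq_getElem _ _ (by omega),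
      List.getElem_take]

private lemma mem_false_iff_getD (w : List Bool) :
    false ∈ w ↔ ∃ i, i < w.length ∧ w.getD i true = false := by
  rw [List.mem_iff_getElem]
  constructor
  · rintro ⟨n, h, hn⟩
    exact ⟨n, h, by rw [List.getD_eq_getElem _ _ h]; exact hn⟩
  · rintro ⟨n, h, hn⟩
    exact ⟨n, h, by rw [← List.getD_eq_getElem _ true h]; exact hn⟩

private lemma pair_infix_iff_s18 (s : List Bool) (a b : Bool) :
    [a, b] <:+: s ↔ ∃ i, i + 1 < s.length ∧ s.getD i true = a ∧ s.getD (i+1) true = b := by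
  constructor
  · rintro ⟨x, y, hs⟩
    have hs' : x ++ ([a, b] ++ y) = s := by simpa [List.append_assoc] using hs
    subst hs'
    refine ⟨x.length, by simp, ?_, ?_⟩
    · rw [List.getD_eq_getElem _ _ (by simp),
          List.getElem_append_right (le_refl x.length)]
      simp
    · rw [List.getD_eq_getElem _ _ (by simp),
          List.getElem_append_right (by omega : x.length ≤ x.length + 1)]
      simp
  · rintro ⟨i, h, ha, hb⟩
    rw [List.getD_eq_getElem _ _ (by omega)] at ha
    rw [List.getD_eq_getElem _ _ (by omega)] at hb
    have h2 : s.drop i = a :: b :: s.drop (i+1+1) := by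
      rw [List.drop_eq_getElem_cons (by omega : i < s.length),
          List.drop_eq_getElem_cons (by omega : i + 1 < s.length), ha, hb]
    have hpre : [a, b] <+: s.drop i := ⟨s.drop (i+1+1), by rw [h2]; rfl⟩
    exact hpre.isInfix.trans (List.drop_suffix i s).isInfix

private def NC (s : List Bool) : Prop :=
  ∀ i, i < s.length → (s.getD i true = true ∨ s.getD ((i+1) % s.length) true = true)

private instance NC.dec : DecidablePred NC := fun s =>
  inferInstanceAs (Decidable (∀ i, i < s.length → _))

private lemma NC_rotate {s : List Bool} (m : ℕ) (h : NC s) : NC (s.rotate m) := by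
  intro i hi
  have hi' : i < s.length := by simpa using hi
  have hp : 0 < s.length := by omega
  rw [getD_rotate s m i hi']
  have hlen : (s.rotate m).length = s.length := List.length_rotate s m
  rw [hlen, getD_rotate s m _ (Nat.mod_lt _ hp)]
  have e3 : ((i+1) % s.length + m) % s.length = ((i + m) % s.length + 1) % s.length := by
    rw [Nat.mod_add_mod, Nat.mod_add_mod]
    congr 1
    omega
  rw [e3]
  exact h ((i + m) % s.length) (Nat.mod_lt _ hp)

private lemma NC_wpow {w : List Bool} (hw : w ≠ []) {k : ℕ} (hk : 0 < k) :
    NC (wpow w k) ↔ NC w := by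
  have hp : 0 < w.length := List.length_pos_iff.2 hw
  have hlen : (wpow w k).length = k * w.length := length_wpow w k
  constructor
  · intro h i hi
    have := h i (by rw [hlen]; calc i < w.length := hi
                                  _ ≤ k * w.length := Nat.le_mul_of_pos_left _ hk)
    rw [hlen] at this
    rw [getD_wpow w hw k i (by nlinarith),
        getD_wpow w hw k _ (Nat.mod_lt _ (by positivity))] at this
    rw [Nat.mod_mod_of_dvd _ ⟨k, by ring⟩, Nat.mod_eq_of_lt hi] at this
    exact this
  · intro h i hi
    rw [hlen] at hi
    rw [getD_wpow w hw k i hi, hlen,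
        getD_wpow w hw k _ (Nat.mod_lt _ (by positivity)),
        Nat.mod_mod_of_dvd _ ⟨k, by ring⟩]
    have := h (i % w.length) (Nat.mod_lt _ hp)
    rwa [Nat.mod_add_mod] at this

-- rotate of a power
private lemma rotate_wpow (w : List Bool) (hw : w ≠ []) (k r : ℕ) :
    (wpow w k).rotate r = wpow (w.rotate (r % w.length)) k := by
  have hd : 0 < w.length := List.length_pos_iff.2 hw
  have hrne : w.rotate (r % w.length) ≠ [] := by
    intro hc; apply hw
    simpa using congrArg List.length hc
  apply List.ext_getElem
  · simp [length_wpow]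
  intro j h1 h2
  rw [List.getElem_rotate, getElem_wpow w hw, getElem_wpow _ hrne, List.getElem_rotate]
  · congr 1
    rw [List.length_rotate]
    rw [length_wpow]
    rw [Nat.mod_mod_of_dvd _ ⟨k, by ring⟩]
    conv_rhs => rw [Nat.add_mod, Nat.mod_mod_of_dvd r (dvd_refl w.length)]
    rw [← Nat.add_mod, Nat.mod_add_mod]

private lemma rotate_wpow_dvd (w : List Bool) (hw : w ≠ []) (k m : ℕ) (h : w.length ∣ m) :
    (wpow w k).rotate m = wpow w k := by
  obtain ⟨c, rfl⟩ := h
  rw [rotate_wpow w hw]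
  simp [Nat.mul_mod_right]

private lemma rotate_eq_rotate_mod_of_period (s : List Bool) (d : ℕ)
    (hrot : s.rotate d = s) (m : ℕ) : s.rotate m = s.rotate (m % d) := by
  have hmul : ∀ q, s.rotate (q * d) = s := by
    intro q
    induction q with
    | zero => simp
    | succ q ih => rw [Nat.succ_mul, ← List.rotate_rotate, ih, hrot]
  conv_lhs => rw [← Nat.div_add_mod m d, ← List.rotate_rotate, mul_comm, hmul]

private lemma lt_of_getD_ff {x y : List Bool} (hx : 0 < x.length) (hy : 0 < y.length)
    (h0 : x.getD 0 true = false) (h1 : y.getD 0 true = true) : x < y := by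
  cases x with
  | nil => simp at hx
  | cons a x =>
    cases y with
    | nil => simp at hy
    | cons b y =>
      simp [List.getD_cons_zero] at h0 h1
      subst h0; subst h1
      exact List.Lex.rel (by decide)

private lemma lt_of_two {x y : List Bool} (hx : 2 ≤ x.length) (hy : 2 ≤ y.length)
    (h0 : x.getD 0 true = y.getD 0 true)
    (hx1 : x.getD 1 true = false) (hy1 : y.getD 1 true = true) : x < y := by
  cases x with
  | nil => simp at hx
  | cons a1 x =>
    cases x with
    | nil => simp at hx
    | cons a2 x =>
      cases y with
      | nil => simp at hy
      | cons b1 y =>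
        cases y with
        | nil => simp at hy
        | cons b2 y =>
          simp [List.getD_cons_zero, List.getD_cons_succ] at h0 hx1 hy1
          subst hx1; subst hy1; subst h0
          exact List.Lex.cons (List.Lex.rel (by decide))

private lemma lyndon_getD_zero {w : List Bool} (hL : IsLyndon w) (hf : false ∈ w)
    (hp : 0 < w.length) : w.getD 0 true = false := by
  obtain ⟨j, hj, hjf⟩ := (mem_false_iff_getD w).1 hf
  by_contra hc
  have h0 : w.getD 0 true = true := by
    cases hb : w.getD 0 true
    · exact absurd hb hc
    · rfl
  have hj0 : 0 < j := by
    rcases Nat.eq_zero_or_pos j with rfl | h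
    · rw [hjf] at h0; exact absurd h0 (by decide)
    · exact h
  have hrot : (w.rotate j).getD 0 true = false := by
    rw [getD_rotate w j 0 hp, Nat.zero_add, Nat.mod_eq_of_lt hj]
    exact hjf
  have hlt : w.rotate j < w := lt_of_getD_ff (by simpa using hp) hp hrot h0
  exact absurd (hL j hj0 hj) (lt_asymm hlt)

private lemma lyndon_getD_last {w : List Bool} (hL : IsLyndon w) (h2 : 2 ≤ w.length)
    (hnf : ¬ [false, false] <:+: w) (hf : false ∈ w) :
    w.getD (w.length - 1) true = true := by
  have hp : 0 < w.length := by omega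
  have h0 : w.getD 0 true = false := lyndon_getD_zero hL hf hp
  by_contra hc
  have hlast : w.getD (w.length - 1) true = false := by
    cases hb : w.getD (w.length - 1) true
    · rfl
    · exact absurd hb hc
  have h1 : w.getD 1 true = true := by
    by_contra hc1
    have : w.getD 1 true = false := by
      cases hb : w.getD 1 true
      · rfl
      · exact absurd hb hc1
    exact hnf ((pair_infix_iff_s18 w false false).2 ⟨0, by omega, h0, this⟩)
  have hrot0 : (w.rotate (w.length - 1)).getD 0 true = false := by
    rw [getD_rotate w _ 0 hp, Nat.zero_add, Nat.mod_eq_of_lt (by omega)]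
    exact hlast
  have hrot1 : (w.rotate (w.length - 1)).getD 1 true = false := by
    rw [getD_rotate w _ 1 (by omega), show 1 + (w.length - 1) = w.length by omega,
        Nat.mod_self]
    exact h0
  have hlt : w.rotate (w.length - 1) < w :=
    lt_of_two (by simpa using h2) h2 (by rw [hrot0, h0]) hrot1 h1
  exact absurd (hL (w.length - 1) (by omega) (by omega)) (lt_asymm hlt)

private lemma NC_of_lyndon {w : List Bool} (hL : IsLyndon w) (h2 : 2 ≤ w.length)
    (hnf : ¬ [false, false] <:+: w) (hf : false ∈ w) : NC w := by
  intro i hi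
  rcases lt_or_ge (i + 1) w.length with h | h
  · by_contra hc
    push_neg at hc
    obtain ⟨ha, hb⟩ := hc
    rw [Nat.mod_eq_of_lt h] at hb
    have ha' : w.getD i true = false := by
      cases hx : w.getD i true
      · rfl
      · exact absurd hx ha
    have hb' : w.getD (i+1) true = false := by
      cases hx : w.getD (i+1) true
      · rfl
      · exact absurd hx hb
    exact hnf ((pair_infix_iff_s18 w false false).2 ⟨i, h, ha', hb'⟩)
  · have : i = w.length - 1 := by omega
    left
    rw [this]
    exact lyndon_getD_last hL h2 hnf hf

private lemma NC_of_all_true {s : List Bool} (h : ∀ b ∈ s, b = true) : NC s := by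
  intro i hi
  left
  rw [List.getD_eq_getElem _ _ hi]
  exact h _ (List.getElem_mem _)

private lemma lyndon_pow_min {w : List Bool} (hL : IsLyndon w) (hw : w ≠ [])
    {k : ℕ} (hk : 0 < k) (j : ℕ) :
    wpow w k ≤ (wpow w k).rotate j ∧ ((wpow w k).rotate j = wpow w k → w.length ∣ j) := by
  have hd : 0 < w.length := List.length_pos_iff.2 hw
  rw [rotate_wpow w hw k j]
  rcases Nat.eq_zero_or_pos (j % w.length) with h0 | hpos
  · rw [h0, List.rotate_zero]
    exact ⟨le_rfl, fun _ => Nat.dvd_of_mod_eq_zero h0⟩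
  · have hlt : wpow w k < wpow (w.rotate (j % w.length)) k := by
      cases k with
      | zero => omega
      | succ k =>
        rw [wpow_succ, wpow_succ]
        exact lex_append _ _ (by simp) (hL _ hpos (Nat.mod_lt _ hd))
    refine ⟨le_of_lt hlt, fun he => ?_⟩
    rw [he] at hlt
    exact absurd hlt (lt_irrefl _)
private lemma inj_pairs {n : ℕ} (hn : 0 < n) {w w' : List Bool}
    (hLw : IsLyndon w) (hLw' : IsLyndon w') (hw : w ≠ []) (hw' : w' ≠ [])
    (hd : w.length ∣ n) (hd' : w'.length ∣ n) {i i' : ℕ}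
    (hi : i < w.length) (hi' : i' < w'.length)
    (h : (wpow w (n / w.length)).rotate i = (wpow w' (n / w'.length)).rotate i') :
    w = w' ∧ i = i' := by
  have hdp : 0 < w.length := List.length_pos_iff.2 hw
  have hdp' : 0 < w'.length := List.length_pos_iff.2 hw'
  have hk : 0 < n / w.length := Nat.div_pos (Nat.le_of_dvd hn hd) hdp
  have hk' : 0 < n / w'.length := Nat.div_pos (Nat.le_of_dvd hn hd') hdp'
  have hkd : n / w.length * w.length = n := Nat.div_mul_cancel hd
  have hkd' : n / w'.length * w'.length = n := Nat.div_mul_cancel hd'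
  have hdn : w.length ≤ n := Nat.le_of_dvd hn hd
  have hdn' : w'.length ≤ n := Nat.le_of_dvd hn hd'
  set s₀ := wpow w (n / w.length) with hs₀
  set s₀' := wpow w' (n / w'.length) with hs₀'
  have hlen : s₀.length = n := by rw [hs₀, length_wpow, hkd]
  have hlen' : s₀'.length = n := by rw [hs₀', length_wpow, hkd']
  have hrotlen : ∀ (t : List Bool), t.length = n → t.rotate n = t := by
    intro t ht
    rw [← ht, List.rotate_length]
  have hrot : s₀' = s₀.rotate (i + (n - i')) := by
    have h1 : (s₀.rotate i).rotate (n - i') = (s₀'.rotate i').rotate (n - i') := by rw [h]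
    rw [List.rotate_rotate, List.rotate_rotate,
        show i' + (n - i') = n by omega, hrotlen s₀' hlen'] at h1
    exact h1.symm
  have hrot' : s₀ = s₀'.rotate (i' + (n - i)) := by
    have h1 : (s₀'.rotate i').rotate (n - i) = (s₀.rotate i).rotate (n - i) := by rw [h]
    rw [List.rotate_rotate, List.rotate_rotate,
        show i + (n - i) = n by omega, hrotlen s₀ hlen] at h1
    exact h1.symm
  have heq : s₀ = s₀' := by
    apply _root_.le_antisymm
    · rw [hrot]; exact (lyndon_pow_min hLw hw hk _).1
    · rw [hrot']; exact (lyndon_pow_min hLw' hw' hk' _).1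
  have hdd : w.length ∣ w'.length := by
    apply (lyndon_pow_min hLw hw hk w'.length).2
    show s₀.rotate w'.length = s₀
    rw [heq]
    exact rotate_wpow_dvd w' hw' _ _ dvd_rfl
  have hdd' : w'.length ∣ w.length := by
    apply (lyndon_pow_min hLw' hw' hk' w.length).2
    show s₀'.rotate w.length = s₀'
    rw [← heq]
    exact rotate_wpow_dvd w hw _ _ dvd_rfl
  have hdeq : w.length = w'.length := Nat.dvd_antisymm hdd hdd'
  have htake : ∀ (u : List Bool) (m : ℕ), u ≠ [] → 0 < m → (wpow u m).take u.length = u := by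
    intro u m hu hm
    cases m with
    | zero => omega
    | succ m => rw [wpow_succ, List.take_left]
  have hweq : w = w' := by
    have t1 : s₀.take w.length = w := htake w _ hw hk
    have t2 : s₀'.take w'.length = w' := htake w' _ hw' hk'
    rw [← t1, ← t2, heq, hdeq]
  subst hweq
  refine ⟨rfl, ?_⟩
  have key : ∀ a b, a < w.length → b < w.length → a < b →
      s₀.rotate a = s₀.rotate b → False := by
    intro a b ha hb hab he
    have h1 : (s₀.rotate a).rotate (n - b) = (s₀.rotate b).rotate (n - b) := by rw [he]
    rw [List.rotate_rotate, List.rotate_rotate,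
        show b + (n - b) = n by omega, hrotlen s₀ hlen] at h1
    have hdvd : w.length ∣ a + (n - b) := (lyndon_pow_min hLw hw hk _).2 h1
    have hsub : w.length ∣ n - (a + (n - b)) := Nat.dvd_sub hd hdvd
    rw [show n - (a + (n - b)) = b - a by omega] at hsub
    have h2 : 0 < b - a := by omega
    have := Nat.le_of_dvd h2 hsub
    omega
  have he2 : s₀.rotate i = s₀.rotate i' := h
  rcases lt_trichotomy i i' with hlt | heq2 | hgt
  · exact (key i i' hi hi' hlt he2).elim
  · exact heq2
  · exact (key i' i hi' hi hgt he2.symm).elim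
private lemma surj_pairs {n : ℕ} (hn : 2 ≤ n) {s : List Bool}
    (hlen : s.length = n) (hNC : NC s) :
    ∃ w i, IsLyndon w ∧ w.length ∣ n ∧
      (w = [true] ∨ (2 ≤ w.length ∧ false ∈ w ∧ ¬ [false, false] <:+: w)) ∧
      i < w.length ∧ (wpow w (n / w.length)).rotate i = s := by
  have hnp : 0 < n := by omega
  -- minimal rotation
  obtain ⟨j₀, hj₀mem, hj₀min⟩ :=
    Finset.exists_min_image (Finset.range n) (fun j => s.rotate j)
      ⟨0, Finset.mem_range.2 hnp⟩
  rw [Finset.mem_range] at hj₀mem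
  set s₀ := s.rotate j₀ with hs₀def
  have hlen₀ : s₀.length = n := by rw [hs₀def, List.length_rotate, hlen]
  have hmin : ∀ r, s₀ ≤ s₀.rotate r := by
    intro r
    have h1 : s₀.rotate r = s.rotate ((j₀ + r) % n) := by
      rw [hs₀def, List.rotate_rotate, ← hlen, List.rotate_mod]
    rw [h1]
    exact hj₀min _ (Finset.mem_range.2 (Nat.mod_lt _ hnp))
  -- minimal period
  have hex : ∃ m, 0 < m ∧ s₀.rotate m = s₀ := ⟨n, hnp, by rw [← hlen₀, List.rotate_length]⟩
  obtain ⟨d, hd0, hrotd, hdmin⟩ :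
      ∃ d, 0 < d ∧ s₀.rotate d = s₀ ∧ ∀ m, 0 < m → m < d → s₀.rotate m ≠ s₀ := by
    refine ⟨Nat.find hex, (Nat.find_spec hex).1, (Nat.find_spec hex).2, ?_⟩
    intro m hm1 hm2 hc
    exact Nat.find_min hex hm2 ⟨hm1, hc⟩
  have hrotmod : ∀ m, s₀.rotate m = s₀.rotate (m % d) :=
    rotate_eq_rotate_mod_of_period s₀ d hrotd
  have hddvd : ∀ m, s₀.rotate m = s₀ → d ∣ m := by
    intro m hm
    rcases Nat.eq_zero_or_pos (m % d) with h0 | hpos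
    · exact Nat.dvd_of_mod_eq_zero h0
    · exfalso
      exact hdmin (m % d) hpos (Nat.mod_lt _ hd0) (by rw [← hrotmod]; exact hm)
  have hdn : d ∣ n := hddvd n (by rw [← hlen₀, List.rotate_length])
  have hdlen : d ≤ n := Nat.le_of_dvd hnp hdn
  have hk : 0 < n / d := Nat.div_pos hdlen hd0
  have hkd : n / d * d = n := Nat.div_mul_cancel hdn
  set w := s₀.take d with hwdef
  have hwlen : w.length = d := by rw [hwdef, List.length_take]; omega
  have hwne : w ≠ [] := by
    intro hc
    have := congrArg List.length hc
    rw [hwlen] at this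
    simp at this
    omega
  -- s₀ is periodic with period d
  have key : ∀ j, j < n → s₀.getD j true = s₀.getD (j % d) true := by
    intro j
    induction j using Nat.strong_induction_on with
    | _ j ih =>
      intro hj
      rcases lt_or_ge j d with h | h
      · rw [Nat.mod_eq_of_lt h]
      · have t := getD_rotate s₀ d (j - d) (by omega)
        rw [hrotd, hlen₀, Nat.sub_add_cancel h, Nat.mod_eq_of_lt hj] at t
        rw [← t, ih (j - d) (by omega) (by omega), Nat.mod_eq_sub_mod h]
  have hgetw : ∀ j, j < d → w.getD j true = s₀.getD j true := by
    intro j hj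
    rw [hwdef]
    exact getD_take s₀ d j hj (by omega)
  have hpow : s₀ = wpow w (n / d) := by
    apply ext_getD
    · rw [hlen₀, length_wpow, hwlen, hkd]
    intro j hj
    rw [hlen₀] at hj
    rw [getD_wpow w hwne _ j (by rw [hwlen, hkd]; exact hj), hwlen,
        hgetw (j % d) (Nat.mod_lt _ hd0), key j hj]
  -- w is Lyndon
  have hLyn : IsLyndon w := by
    intro r hr0 hrd
    rw [hwlen] at hrd
    by_contra hc
    have hle : w.rotate r ≤ w := not_lt.1 hc
    have h1 : wpow (w.rotate r) (n / d) ≤ wpow w (n / d) := by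
      cases Nat.eq_zero_or_pos (n / d) with
      | inl h => omega
      | inr h =>
        rcases lt_or_eq_of_le hle with hlt | heq
        · obtain ⟨k', hk'⟩ : ∃ k', n / d = k' + 1 := ⟨n / d - 1, by omega⟩
          rw [hk', wpow_succ, wpow_succ]
          exact le_of_lt (lex_append _ _ (by simp) hlt)
        · rw [heq]
    have h2 : wpow (w.rotate r) (n / d) = s₀.rotate r := by
      rw [hpow, rotate_wpow w hwne, hwlen, Nat.mod_eq_of_lt hrd]
    rw [h2, ← hpow] at h1
    have h3 : s₀.rotate r = s₀ := _root_.le_antisymm h1 (hmin r)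
    exact hdmin r hr0 hrd h3
  have hNCs₀ : NC s₀ := NC_rotate j₀ hNC
  -- membership conditions
  have hmemcond : w = [true] ∨ (2 ≤ w.length ∧ false ∈ w ∧ ¬ [false, false] <:+: w) := by
    rcases eq_or_lt_of_le (show 1 ≤ d by omega) with hd1 | hd2
    · -- d = 1
      left
      have hw0 : w.getD 0 true = true := by
        by_contra hc
        have hft : w.getD 0 true = false := by
          cases hx : w.getD 0 true
          · rfl
          · exact absurd hx hc
        have h0 : s₀.getD 0 true = false := by rw [← hgetw 0 (by omega)]; exact hft
        have h1 : s₀.getD 1 true = false := by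
          rw [key 1 (by omega), show 1 % d = 0 by rw [← hd1]]
          exact h0
        rcases hNCs₀ 0 (by rw [hlen₀]; omega) with h | h
        · rw [h0] at h; exact absurd h (by decide)
        · rw [hlen₀, show (0 + 1) % n = 1 from Nat.mod_eq_of_lt (by omega), h1] at h
          exact absurd h (by decide)
      apply ext_getD (by rw [hwlen, List.length_singleton]; omega)
      intro i hi
      rw [hwlen, ← hd1] at hi
      interval_cases i
      rw [hw0]
      rfl
    · right
      refine ⟨by omega, ?_, ?_⟩
      · by_contra hnf
        have hall : ∀ b ∈ w, b = true := by
          intro b hb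
          cases b
          · exact absurd hb hnf
          · rfl
        have hrep := List.eq_replicate_of_mem hall
        have hrot1 : w.rotate 1 = w := by
          conv_lhs => rw [hrep]
          rw [List.rotate_replicate, ← hrep]
        have := hLyn 1 one_pos (by omega)
        rw [hrot1] at this
        exact absurd this (lt_irrefl _)
      · intro hinf
        obtain ⟨i, hi1, ha, hb⟩ := (pair_infix_iff_s18 w false false).1 hinf
        rw [hwlen] at hi1
        have ha' : s₀.getD i true = false := by rw [← hgetw i (by omega)]; exact ha
        have hb' : s₀.getD (i+1) true = false := by rw [← hgetw (i+1) (by omega)]; exact hb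
        rcases hNCs₀ i (by rw [hlen₀]; omega) with h | h
        · rw [ha'] at h; exact absurd h (by decide)
        · rw [hlen₀, Nat.mod_eq_of_lt (by omega), hb'] at h
          exact absurd h (by decide)
  have hs : s₀.rotate (n - j₀) = s := by
    rw [hs₀def, List.rotate_rotate, show j₀ + (n - j₀) = n by omega, ← hlen,
        List.rotate_length]
  refine ⟨w, (n - j₀) % d, hLyn, by rw [hwlen]; exact hdn, hmemcond,
    by rw [hwlen]; exact Nat.mod_lt _ hd0, ?_⟩
  rw [hwlen, ← hpow, ← hrotmod (n - j₀)]
  exact hs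
private def RT (a b : Bool) : Prop := a = true ∨ b = true

private instance RT.dec : DecidableRel RT := fun a b =>
  inferInstanceAs (Decidable (_ ∨ _))

private def allB : ℕ → Finset (List Bool)
  | 0 => {[]}
  | m+1 => ((allB m).image (false :: ·)) ∪ ((allB m).image (true :: ·))

private lemma mem_allB : ∀ {m : ℕ} {s : List Bool}, s ∈ allB m ↔ s.length = m
  | 0, s => by
    simp only [allB, Finset.mem_singleton, List.length_eq_zero_iff]
  | m+1, s => by
    simp only [allB, Finset.mem_union, Finset.mem_image]
    constructor
    · rintro (⟨t, ht, rfl⟩ | ⟨t, ht, rfl⟩) <;>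
        simp [mem_allB.1 ht]
    · intro h
      cases s with
      | nil => simp at h
      | cons b t =>
        cases b
        · exact Or.inl ⟨t, mem_allB.2 (by simpa using h), rfl⟩
        · exact Or.inr ⟨t, mem_allB.2 (by simpa using h), rfl⟩

private lemma cons_filter_card (b : Bool) (m : ℕ) (P Q : List Bool → Prop)
    [DecidablePred P] [DecidablePred Q]
    (h : ∀ t : List Bool, t.length = m → (P (b :: t) ↔ Q t)) :
    ((allB (m+1)).filter (fun s => s.getD 0 true = b ∧ P s)).card
      = ((allB m).filter Q).card := by
  apply Finset.card_nbij' (i := List.tail) (j := (b :: ·))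
  · intro s hs
    rw [Finset.mem_coe, Finset.mem_filter] at hs
    obtain ⟨hmem, hb, hP⟩ := hs
    rw [mem_allB] at hmem
    cases s with
    | nil => simp at hmem
    | cons a t =>
      simp only [List.getD_cons_zero] at hb
      subst hb
      rw [Finset.mem_coe, Finset.mem_filter, mem_allB]
      refine ⟨by simpa using hmem, ?_⟩
      rw [List.tail_cons]
      exact (h t (by simpa using hmem)).1 hP
  · intro t ht
    rw [Finset.mem_coe, Finset.mem_filter, mem_allB] at ht
    rw [Finset.mem_coe, Finset.mem_filter, mem_allB]
    refine ⟨by simp [ht.1], by simp, ?_⟩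
    exact (h t ht.1).2 ht.2
  · intro s hs
    rw [Finset.mem_coe, Finset.mem_filter] at hs
    obtain ⟨hmem, hb, hP⟩ := hs
    cases s with
    | nil => rw [mem_allB] at hmem; simp at hmem
    | cons a t =>
      simp only [List.getD_cons_zero] at hb
      subst hb
      rfl
  · intro t _
    rfl

private lemma split_card (m : ℕ) (P : List Bool → Prop) [DecidablePred P] :
    ((allB m).filter P).card
      = ((allB m).filter (fun s => s.getD 0 true = true ∧ P s)).card
        + ((allB m).filter (fun s => s.getD 0 true = false ∧ P s)).card := by
  rw [← Finset.card_filter_add_card_filter_not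
      (s := (allB m).filter P) (p := fun s => s.getD 0 true = true)]
  congr 1
  · rw [Finset.filter_filter]
    apply Finset.card_nbij' id id <;> intro a ha <;> simp_all [and_comm]
  · rw [Finset.filter_filter]
    apply Finset.card_nbij' id id <;> intro a ha <;>
      simp_all [and_comm, Bool.not_eq_true]

private lemma chain_iff_getD {s : List Bool} :
    List.IsChain RT s ↔
      ∀ i, i + 1 < s.length → (s.getD i true = true ∨ s.getD (i+1) true = true) := by
  rw [List.isChain_iff_getElem]
  constructor
  · intro h i hi
    have := h i (by omega)
    rw [List.getD_eq_getElem _ _ (by omega), List.getD_eq_getElem _ _ (by omega)]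
    exact this
  · intro h i hi
    have := h i (by omega)
    rw [List.getD_eq_getElem _ _ (by omega), List.getD_eq_getElem _ _ (by omega)] at this
    exact this

private lemma NC_iff_chain {s : List Bool} (hs : s ≠ []) :
    NC s ↔ List.IsChain RT s ∧
      (s.getD (s.length - 1) true = true ∨ s.getD 0 true = true) := by
  have hp : 0 < s.length := List.length_pos_iff.2 hs
  constructor
  · intro h
    refine ⟨chain_iff_getD.2 (fun i hi => ?_), ?_⟩
    · have := h i (by omega)
      rwa [Nat.mod_eq_of_lt hi] at this
    · have := h (s.length - 1) (by omega)
      rwa [show (s.length - 1 + 1) % s.length = 0 by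
        rw [Nat.sub_add_cancel hp, Nat.mod_self]] at this
  · rintro ⟨hc, hw⟩ i hi
    rcases lt_or_ge (i + 1) s.length with h1 | h1
    · rw [Nat.mod_eq_of_lt h1]
      exact chain_iff_getD.1 hc i h1
    · have hi' : i = s.length - 1 := by omega
      rw [hi', show (s.length - 1 + 1) % s.length = 0 by
        rw [Nat.sub_add_cancel hp, Nat.mod_self]]
      rcases hw with hw | hw
      · exact Or.inl hw
      · exact Or.inr hw

private lemma chain_cons_true (t : List Bool) :
    List.IsChain RT (true :: t) ↔ List.IsChain RT t := by
  rw [List.isChain_cons]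
  simp [RT]

private lemma chain_cons_false (t : List Bool) :
    List.IsChain RT (false :: t) ↔
      List.IsChain RT t ∧ (t = [] ∨ t.getD 0 true = true) := by
  rw [List.isChain_cons]
  rw [and_comm]
  apply and_congr_right
  intro _
  cases t with
  | nil => simp
  | cons a t =>
    cases a <;> simp [RT]

private lemma AA' : ∀ m : ℕ,
    ((allB m).filter (fun s => List.IsChain RT s)).card = Nat.fib (m+2) ∧
    ((allB m).filter (fun s => List.IsChain RT s ∧ (s = [] ∨ s.getD 0 true = true))).card
      = Nat.fib (m+1) := by
  intro m
  induction m with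
  | zero =>
    constructor <;> simp [allB, Finset.filter_singleton] <;> decide
  | succ m ih =>
    obtain ⟨ihA, ihA'⟩ := ih
    have hsplit := split_card (m+1) (fun s => List.IsChain RT s)
    have h1 : ((allB (m+1)).filter
        (fun s => s.getD 0 true = true ∧ List.IsChain RT s)).card = Nat.fib (m+2) := by
      rw [cons_filter_card true m _ (fun t => List.IsChain RT t)
        (fun t _ => chain_cons_true t)]
      exact ihA
    have h2 : ((allB (m+1)).filter
        (fun s => s.getD 0 true = false ∧ List.IsChain RT s)).card = Nat.fib (m+1) := by
      rw [cons_filter_card false m _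
        (fun t => List.IsChain RT t ∧ (t = [] ∨ t.getD 0 true = true))
        (fun t _ => chain_cons_false t)]
      exact ihA'
    constructor
    · rw [hsplit, h1, h2]
      have hf : Nat.fib (m+1+2) = Nat.fib (m+1) + Nat.fib (m+2) := Nat.fib_add_two
      omega
    · have hcongr : (allB (m+1)).filter
          (fun s => List.IsChain RT s ∧ (s = [] ∨ s.getD 0 true = true))
          = (allB (m+1)).filter (fun s => s.getD 0 true = true ∧ List.IsChain RT s) := by
        apply Finset.filter_congr
        intro s hs
        rw [mem_allB] at hs
        have hne : s ≠ [] := by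
          intro hc; rw [hc] at hs; simp at hs
        constructor
        · rintro ⟨hc, h | h⟩
          · exact absurd h hne
          · exact ⟨h, hc⟩
        · rintro ⟨h, hc⟩
          exact ⟨hc, Or.inr h⟩
      rw [hcongr, h1]
private lemma chain_reverse {t : List Bool} :
    List.IsChain RT t.reverse ↔ List.IsChain RT t := by
  rw [List.isChain_reverse]
  constructor
  · intro h; exact h.imp (fun a b hab => hab.symm)
  · intro h; exact h.imp (fun a b hab => hab.symm)

private lemma getD_reverse {t : List Bool} (ht : t ≠ []) :
    t.reverse.getD 0 true = t.getD (t.length - 1) true := by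
  have hp : 0 < t.length := List.length_pos_iff.2 ht
  rw [List.getD_eq_getElem _ _ (by simpa using hp),
      List.getD_eq_getElem _ _ (by omega), List.getElem_reverse]
  congr 1 <;> omega

private lemma card_ends (m : ℕ) :
    ((allB m).filter
      (fun t => List.IsChain RT t ∧ (t = [] ∨ t.getD (t.length - 1) true = true))).card
    = ((allB m).filter
      (fun t => List.IsChain RT t ∧ (t = [] ∨ t.getD 0 true = true))).card := by
  apply Finset.card_nbij' (i := List.reverse) (j := List.reverse)
  · intro t ht
    rw [Finset.mem_coe, Finset.mem_filter, mem_allB] at ht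
    rw [Finset.mem_coe, Finset.mem_filter, mem_allB]
    obtain ⟨hlen, hc, hor⟩ := ht
    refine ⟨by simpa using hlen, chain_reverse.2 hc, ?_⟩
    rcases hor with h | h
    · left; simp [h]
    · rcases eq_or_ne t [] with rfl | hne
      · left; simp
      · right; rw [getD_reverse hne]; exact h
  · intro t ht
    rw [Finset.mem_coe, Finset.mem_filter, mem_allB] at ht
    rw [Finset.mem_coe, Finset.mem_filter, mem_allB]
    obtain ⟨hlen, hc, hor⟩ := ht
    refine ⟨by simpa using hlen, chain_reverse.2 hc, ?_⟩
    rcases hor with h | h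
    · left; simp [h]
    · rcases eq_or_ne t [] with rfl | hne
      · left; simp
      · right
        have hh := getD_reverse (t := t.reverse) (by simpa using hne)
        rw [List.reverse_reverse] at hh
        rw [← hh]
        exact h
  · intro t _; exact List.reverse_reverse t
  · intro t _; exact List.reverse_reverse t

private lemma cardG (m : ℕ) (hm : 1 ≤ m) :
    ((allB m).filter (fun t => List.IsChain RT t ∧ t.getD 0 true = true ∧
      t.getD (t.length - 1) true = true)).card = Nat.fib m := by
  obtain ⟨m', rfl⟩ : ∃ m', m = m' + 1 := ⟨m - 1, by omega⟩
  have hcongr : (allB (m'+1)).filter (fun t => List.IsChain RT t ∧ t.getD 0 true = true ∧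
        t.getD (t.length - 1) true = true)
      = (allB (m'+1)).filter (fun s => s.getD 0 true = true ∧
        (List.IsChain RT s ∧ s.getD (s.length - 1) true = true)) := by
    apply Finset.filter_congr
    intro s _
    constructor
    · rintro ⟨h1, h2, h3⟩; exact ⟨h2, h1, h3⟩
    · rintro ⟨h1, h2, h3⟩; exact ⟨h2, h1, h3⟩
  rw [hcongr, cons_filter_card true m'
    (fun s => List.IsChain RT s ∧ s.getD (s.length - 1) true = true)
    (fun t => List.IsChain RT t ∧ (t = [] ∨ t.getD (t.length - 1) true = true)) ?_,
    card_ends, (AA' m').2]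
  intro t htlen
  show List.IsChain RT (true :: t) ∧ (true :: t).getD ((true :: t).length - 1) true = true ↔
    List.IsChain RT t ∧ (t = [] ∨ t.getD (t.length - 1) true = true)
  rw [chain_cons_true]
  apply and_congr_right
  intro _
  cases t with
  | nil => simp
  | cons a t =>
    simp only [List.length_cons, Nat.add_sub_cancel, List.getD_cons_succ, ne_eq,
      reduceCtorEq, false_or]

private lemma card_circ_true (n : ℕ) (hn : 1 ≤ n) :
    ((allB n).filter (fun s => s.getD 0 true = true ∧ NC s)).card = Nat.fib (n+1) := by
  obtain ⟨m, rfl⟩ : ∃ m, n = m + 1 := ⟨n - 1, by omega⟩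
  rw [cons_filter_card true m NC (fun t => List.IsChain RT t) ?_, (AA' m).1]
  intro t htlen
  show NC (true :: t) ↔ List.IsChain RT t
  rw [NC_iff_chain (by simp), chain_cons_true]
  simp [List.getD_cons_zero]

private lemma card_circ_false (n : ℕ) (hn : 2 ≤ n) :
    ((allB n).filter (fun s => s.getD 0 true = false ∧ NC s)).card = Nat.fib (n-1) := by
  obtain ⟨m, rfl⟩ : ∃ m, n = m + 1 := ⟨n - 1, by omega⟩
  rw [cons_filter_card false m NC (fun t => List.IsChain RT t ∧ t.getD 0 true = true ∧
      t.getD (t.length - 1) true = true) ?_, cardG m (by omega)]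
  · simp
  intro t htlen
  show NC (false :: t) ↔ List.IsChain RT t ∧ t.getD 0 true = true ∧
      t.getD (t.length - 1) true = true
  have htne : t ≠ [] := by
    intro hc
    rw [hc] at htlen
    simp at htlen
    omega
  rw [NC_iff_chain (by simp), chain_cons_false]
  have h1 : (false :: t).getD 0 true = false := List.getD_cons_zero
  have h2 : (false :: t).getD ((false :: t).length - 1) true
      = t.getD (t.length - 1) true := by
    have : (false :: t).length - 1 = (t.length - 1) + 1 := by
      have := List.length_pos_iff.2 htne
      simp [List.length_cons]
      omega
    rw [this, List.getD_cons_succ]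
  rw [h1, h2]
  have h3 : (t = [] ∨ t.getD 0 true = true) ↔ t.getD 0 true = true := by
    simp [htne]
  rw [h3]
  constructor
  · rintro ⟨⟨hc, h0⟩, hl | hl⟩
    · exact ⟨hc, h0, hl⟩
    · exact absurd hl (by simp)
  · rintro ⟨hc, h0, hl⟩
    exact ⟨⟨hc, h0⟩, Or.inl hl⟩
private lemma count_false_sum (l : List Bool) :
    (l.count false : ℤ) = ∑ j ∈ Finset.range l.length,
      (if l.getD j true = false then (1 : ℤ) else 0) := by
  induction l with
  | nil => simp
  | cons b t ih =>
    rw [List.count_cons, List.length_cons, Finset.sum_range_succ']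
    simp only [List.getD_cons_succ, List.getD_cons_zero]
    rw [← ih]
    push_cast
    cases b <;> simp

private lemma sum_ind (n : ℕ) (hn : 2 ≤ n) (j : ℕ) (hj : j < n) :
    ∑ s ∈ (allB n).filter NC, (if s.getD j true = false then (1:ℤ) else 0)
      = ∑ s ∈ (allB n).filter NC, (if s.getD 0 true = false then (1:ℤ) else 0) := by
  apply Finset.sum_nbij' (i := fun s => s.rotate j) (j := fun s => s.rotate (n - j))
  · intro s hs
    rw [Finset.mem_filter, mem_allB] at hs ⊢
    exact ⟨by rw [List.length_rotate]; exact hs.1, NC_rotate j hs.2⟩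
  · intro s hs
    rw [Finset.mem_filter, mem_allB] at hs ⊢
    exact ⟨by rw [List.length_rotate]; exact hs.1, NC_rotate (n - j) hs.2⟩
  · intro s hs
    rw [Finset.mem_filter, mem_allB] at hs
    rw [List.rotate_rotate, show j + (n - j) = n by omega, ← hs.1, List.rotate_length]
  · intro s hs
    rw [Finset.mem_filter, mem_allB] at hs
    rw [List.rotate_rotate, show n - j + j = n by omega, ← hs.1, List.rotate_length]
  · intro s hs
    rw [Finset.mem_filter, mem_allB] at hs
    have h0 : (s.rotate j).getD 0 true = s.getD j true := by
      rw [getD_rotate s j 0 (by omega), Nat.zero_add, hs.1, Nat.mod_eq_of_lt hj]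
    rw [h0]

private lemma sum_count_circ (n : ℕ) (hn : 2 ≤ n) :
    ∑ s ∈ (allB n).filter NC, (s.count false : ℤ) = n * Nat.fib (n-1) := by
  have h1 : ∀ s ∈ (allB n).filter NC, (s.count false : ℤ)
      = ∑ j ∈ Finset.range n, (if s.getD j true = false then (1:ℤ) else 0) := by
    intro s hs
    rw [Finset.mem_filter, mem_allB] at hs
    rw [count_false_sum, hs.1]
  rw [Finset.sum_congr rfl h1, Finset.sum_comm]
  have h2 : ∀ j ∈ Finset.range n,
      ∑ s ∈ (allB n).filter NC, (if s.getD j true = false then (1:ℤ) else 0)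
      = Nat.fib (n-1) := by
    intro j hj
    rw [Finset.mem_range] at hj
    rw [sum_ind n hn j hj, Finset.sum_boole]
    rw [Finset.filter_filter]
    have : (allB n).filter (fun s => NC s ∧ s.getD 0 true = false)
        = (allB n).filter (fun s => s.getD 0 true = false ∧ NC s) := by
      apply Finset.filter_congr
      intro s _
      exact and_comm
    rw [this, card_circ_false n hn]
  rw [Finset.sum_congr rfl h2, Finset.sum_const, Finset.card_range]
  push_cast
  ring

private lemma card_circ (n : ℕ) (hn : 2 ≤ n) :
    ((allB n).filter NC).card = Nat.fib (n+1) + Nat.fib (n-1) := by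
  rw [split_card n NC, card_circ_true n (by omega), card_circ_false n hn]

private lemma T_val (n : ℕ) (hn : 2 ≤ n) :
    ∑ s ∈ (allB n).filter NC, (2 * (s.count false : ℤ) - n)
      = -(n:ℤ) * Nat.fib n := by
  rw [Finset.sum_sub_distrib, ← Finset.mul_sum, sum_count_circ n hn,
      Finset.sum_const, card_circ n hn]
  have hfib : Nat.fib (n+1) = Nat.fib (n-1) + Nat.fib n := by
    obtain ⟨m, rfl⟩ : ∃ m, n = m + 2 := ⟨n - 2, by omega⟩
    have h1 : m + 2 + 1 = m + 1 + 2 := by omega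
    have h2 : m + 2 - 1 = m + 1 := by omega
    rw [h1, h2, Nat.fib_add_two]
  rw [hfib]
  push_cast
  ring
private lemma count_add (w : List Bool) : w.count true + w.count false = w.length := by
  induction w with
  | nil => simp
  | cons b t ih =>
    cases b <;> simp [List.count_cons] <;> omega

/-- For `n ≥ 2`, the skew (number of 0's minus number of 1's) of the
concatenation `ℓ₁` of all binary Lyndon words of length `d ∣ n`, `d ≥ 2`,
containing `0` but not `00`, equals `-F_n + 1`. -/
theorem skew_ell_one (n : ℕ) (hn : 2 ≤ n)
    (L : List (List Bool)) (hnd : L.Nodup)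
    (hmem : ∀ w, w ∈ L ↔
      IsLyndon w ∧ w.length ∣ n ∧ 2 ≤ w.length ∧ false ∈ w ∧
        ¬ [false, false] <:+: w) :
    (L.flatten.count false : ℤ) - (L.flatten.count true : ℤ) =
      -(Nat.fib n : ℤ) + 1 := by
  classical
  have hnp : 0 < n := by omega
  have htrue_not : [true] ∉ L := by
    intro h
    have h2 := ((hmem [true]).1 h).2.2.1
    simp at h2
  set LF : Finset (List Bool) := insert [true] L.toFinset with hLF
  have hLFprop : ∀ w ∈ LF, IsLyndon w ∧ w ≠ [] ∧ w.length ∣ n := by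
    intro w hw
    rcases Finset.mem_insert.1 hw with rfl | hwL
    · refine ⟨?_, by simp, by simp⟩
      intro i h1 h2
      simp at h2
      omega
    · rw [List.mem_toFinset] at hwL
      obtain ⟨h1, h2, h3, _⟩ := (hmem w).1 hwL
      refine ⟨h1, ?_, h2⟩
      intro hc
      rw [hc] at h3
      simp at h3
  have hbij : ∑ p ∈ LF.sigma (fun w => Finset.range w.length),
        (2 * ((n / p.1.length : ℕ) : ℤ) * (p.1.count false : ℤ) - n)
      = ∑ s ∈ (allB n).filter NC, (2 * (s.count false : ℤ) - n) := by
    apply Finset.sum_bij (i := fun p _ => (wpow p.1 (n / p.1.length)).rotate p.2)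
    · rintro ⟨w, i⟩ hp
      rw [Finset.mem_sigma] at hp
      obtain ⟨hw, hi⟩ := hp
      rw [Finset.mem_range] at hi
      obtain ⟨hLyn, hne, hdvd⟩ := hLFprop w hw
      rw [Finset.mem_filter, mem_allB]
      constructor
      · rw [List.length_rotate, length_wpow, Nat.div_mul_cancel hdvd]
      · apply NC_rotate
        rw [NC_wpow hne (Nat.div_pos (Nat.le_of_dvd hnp hdvd) (List.length_pos_iff.2 hne))]
        rcases Finset.mem_insert.1 hw with rfl | hwL
        · exact NC_of_all_true (by intro b hb; simpa using hb)
        · rw [List.mem_toFinset] at hwL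
          obtain ⟨h1, h2, h3, h4, h5⟩ := (hmem w).1 hwL
          exact NC_of_lyndon h1 h3 h5 h4
    · rintro ⟨w, i⟩ hp ⟨w', i'⟩ hp' heq
      rw [Finset.mem_sigma] at hp hp'
      obtain ⟨hw, hi⟩ := hp
      obtain ⟨hw', hi'⟩ := hp'
      rw [Finset.mem_range] at hi hi'
      obtain ⟨hLyn, hne, hdvd⟩ := hLFprop w hw
      obtain ⟨hLyn', hne', hdvd'⟩ := hLFprop w' hw'
      obtain ⟨h1, h2⟩ := inj_pairs hnp hLyn hLyn' hne hne' hdvd hdvd' hi hi' heq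
      subst h1
      subst h2
      rfl
    · intro s hs
      rw [Finset.mem_filter, mem_allB] at hs
      obtain ⟨w, i, hLyn, hdvd, hcond, hi, hmap⟩ := surj_pairs hn hs.1 hs.2
      refine ⟨⟨w, i⟩, ?_, hmap⟩
      rw [Finset.mem_sigma]
      refine ⟨?_, Finset.mem_range.2 hi⟩
      rcases hcond with rfl | ⟨h2, h4, h5⟩
      · exact Finset.mem_insert_self _ _
      · apply Finset.mem_insert_of_mem
        rw [List.mem_toFinset, hmem]
        exact ⟨hLyn, hdvd, h2, h4, h5⟩
    · rintro ⟨w, i⟩ hp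
      rw [Finset.mem_sigma] at hp
      obtain ⟨hLyn, hne, hdvd⟩ := hLFprop _ hp.1
      have hcount : ((wpow w (n / w.length)).rotate i).count false
          = (n / w.length) * w.count false := by
        rw [(List.rotate_perm _ i).count_eq, count_wpow]
      rw [hcount]
      push_cast
      ring
  rw [Finset.sum_sigma] at hbij
  have hinner : ∀ w ∈ LF,
      (∑ i ∈ Finset.range w.length,
        (2 * ((n / w.length : ℕ) : ℤ) * (w.count false : ℤ) - n))
      = (n:ℤ) * (2 * (w.count false : ℤ) - (w.length : ℤ)) := by
    intro w hw
    obtain ⟨_, hne, hdvd⟩ := hLFprop w hw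
    rw [Finset.sum_const, Finset.card_range, nsmul_eq_mul]
    have hc : ((n / w.length : ℕ) : ℤ) * (w.length : ℤ) = (n : ℤ) := by
      exact_mod_cast congrArg (Nat.cast : ℕ → ℤ) (Nat.div_mul_cancel hdvd)
    linear_combination (2 * (w.count false : ℤ)) * hc
  rw [Finset.sum_congr rfl hinner, ← Finset.mul_sum, T_val n hn] at hbij
  have hnotin : [true] ∉ L.toFinset := by
    rw [List.mem_toFinset]; exact htrue_not
  rw [hLF, Finset.sum_insert hnotin] at hbij
  have hterm : 2 * ((([true] : List Bool).count false : ℕ) : ℤ)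
      - ((([true] : List Bool).length : ℕ) : ℤ) = -1 := by
    norm_num
  rw [hterm] at hbij
  have hS : ∑ w ∈ L.toFinset, (2 * (w.count false : ℤ) - (w.length : ℤ))
      = -(Nat.fib n : ℤ) + 1 := by
    have hn0 : (n:ℤ) ≠ 0 := by
      simp
      omega
    have h2 : (n:ℤ) * (-1 + ∑ w ∈ L.toFinset, (2 * (w.count false : ℤ) - (w.length : ℤ)))
        = (n:ℤ) * (-(Nat.fib n : ℤ)) := by
      rw [hbij]
      ring
    have h3 := mul_left_cancel₀ hn0 h2
    linarith
  -- relate goal to hS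
  have hgf : (L.flatten.count false : ℤ) = ∑ w ∈ L.toFinset, (w.count false : ℤ) := by
    rw [List.count_flatten, List.sum_toFinset _ hnd, Nat.cast_list_sum, List.map_map]
    rfl
  have hgt : (L.flatten.count true : ℤ) = ∑ w ∈ L.toFinset, (w.count true : ℤ) := by
    rw [List.count_flatten, List.sum_toFinset _ hnd, Nat.cast_list_sum, List.map_map]
    rfl
  rw [hgf, hgt, ← Finset.sum_sub_distrib, ← hS]
  apply Finset.sum_congr rfl
  intro w _
  have := count_add w
  have h4 : ((w.count true : ℕ) : ℤ) + ((w.count false : ℕ) : ℤ) = ((w.length : ℕ) : ℤ) := by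
    exact_mod_cast congrArg (Nat.cast : ℕ → ℤ) this
  linarith
end
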